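/- arXiv:2206.06152 — 7 statements merged into one kernel-verified Lean document; each statement's English description precedes it below -/
import Mathlib

section
/- Let X be a real Banach space, let {x_n} and {w_n} be bounded sequences in X, and let λ ∈ (0,1). Suppose that x_{n+1} = λ w_n + (1 − λ) x_n for all n ∈ ℕ and that ‖w_{n+1} − w_n‖ ≤ ‖x_{n+1} − x_n‖ for all n ∈ ℕ. Then lim_{n→∞} ‖w_n − x_n‖ = 0. -/
/-!
Write `a n = ‖w n - x n‖`. Since `x (n+1)` is a convex combination of `w n` and `x n`,
`a` is antitone, and so converges to some `r ≥ 0`. Ishikawa's inequality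
`(1 + n l) a i ≤ ‖w (i+n) - x i‖ + (1 - l)⁻ⁿ (a i - a (i+n))`, proved by induction on `n`,
gives `(1 + n l) r ≤ M` in the limit `i → ∞`, where `M` bounds all `‖w j - x i‖`;
as `n` is arbitrary, `r = 0`.
-/

open Filter Topology

theorem Antitone.tendsto_atTop_zero_of_mul_le {a c μ : ℕ → ℝ} {M : ℝ} (ha : Antitone a)
    (ha0 : ∀ n, 0 ≤ a n) (hc : Tendsto c atTop atTop)
    (h : ∀ n i, c n * a i ≤ M + μ n * (a i - a (i + n))) :
    Tendsto a atTop (𝓝 0) := by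
  have hbdd : BddBelow (Set.range a) := ⟨0, Set.forall_mem_range.2 ha0⟩
  have hlim : Tendsto a atTop (𝓝 (⨅ n, a n)) := tendsto_atTop_ciInf ha hbdd
  have hr_le : ∀ n, c n * ⨅ i, a i ≤ M := fun n => by
    have hshift : Tendsto (fun i => a i - a (i + n)) atTop (𝓝 0) := by
      simpa using hlim.sub (hlim.comp (tendsto_add_atTop_nat n))
    refine le_of_tendsto_of_tendsto' (hlim.const_mul (c n)) ?_ (h n)
    simpa using (hshift.const_mul (μ n)).const_add M
  obtain hr | hr := (le_ciInf ha0).eq_or_lt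
  · rwa [← hr] at hlim
  · obtain ⟨n, hn⟩ := (hc.eventually_gt_atTop (M / ⨅ i, a i)).exists
    exact absurd (hr_le n) (not_le.2 ((div_lt_iff₀ hr).1 hn))

theorem one_add_mul_le_inv_one_sub_pow {l : ℝ} (hl0 : 0 ≤ l) (hl1 : l < 1) (n : ℕ) :
    1 + n * l ≤ (1 - l)⁻¹ ^ n := by
  have h : 1 + l ≤ (1 - l)⁻¹ := by
    rw [← one_div, le_div_iff₀ (sub_pos.2 hl1)]
    nlinarith
  calc 1 + n * l ≤ (1 + l) ^ n := one_add_mul_le_pow (by linarith) n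
    _ ≤ (1 - l)⁻¹ ^ n := by gcongr

section

variable {X : Type*} [NormedAddCommGroup X] [NormedSpace ℝ X] {x w : ℕ → X} {l : ℝ}

theorem norm_sub_succ_le_of_eq_smul_add (hl0 : 0 ≤ l) (hl1 : l ≤ 1)
    (hrec : ∀ n, x (n + 1) = l • w n + (1 - l) • x n) (m i : ℕ) :
    ‖w m - x (i + 1)‖ ≤ (1 - l) * ‖w m - x i‖ + l * ‖w m - w i‖ := by
  have hconvex : w m - x (i + 1) = (1 - l) • (w m - x i) + l • (w m - w i) := by
    rw [hrec]; module
  calc ‖w m - x (i + 1)‖ ≤ ‖(1 - l) • (w m - x i)‖ + ‖l • (w m - w i)‖ := by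
        rw [hconvex]; exact norm_add_le _ _
    _ = (1 - l) * ‖w m - x i‖ + l * ‖w m - w i‖ := by
        rw [norm_smul, norm_smul, Real.norm_of_nonneg (sub_nonneg.2 hl1),
          Real.norm_of_nonneg hl0]

theorem norm_succ_sub_of_eq_smul_add (hl0 : 0 ≤ l)
    (hrec : ∀ n, x (n + 1) = l • w n + (1 - l) • x n) (n : ℕ) :
    ‖x (n + 1) - x n‖ = l * ‖w n - x n‖ := by
  have hstep : x (n + 1) - x n = l • (w n - x n) := by rw [hrec]; module
  rw [hstep, norm_smul, Real.norm_of_nonneg hl0]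

theorem antitone_norm_sub_of_eq_smul_add (hl0 : 0 ≤ l) (hl1 : l ≤ 1)
    (hrec : ∀ n, x (n + 1) = l • w n + (1 - l) • x n)
    (hw : ∀ n, ‖w (n + 1) - w n‖ ≤ ‖x (n + 1) - x n‖) :
    Antitone fun n => ‖w n - x n‖ := by
  refine antitone_nat_of_succ_le fun n => ?_
  calc ‖w (n + 1) - x (n + 1)‖ ≤ ‖w (n + 1) - w n‖ + ‖w n - x (n + 1)‖ :=
        norm_sub_le_norm_sub_add_norm_sub _ _ _
    _ ≤ l * ‖w n - x n‖ + (1 - l) * ‖w n - x n‖ := by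
        gcongr
        · exact (hw n).trans (norm_succ_sub_of_eq_smul_add hl0 hrec n).le
        · simpa using norm_sub_succ_le_of_eq_smul_add hl0 hl1 hrec n n
    _ = ‖w n - x n‖ := by ring

theorem norm_add_sub_le_of_eq_smul_add (hl0 : 0 ≤ l) (hl1 : l ≤ 1)
    (hrec : ∀ n, x (n + 1) = l • w n + (1 - l) • x n)
    (hw : ∀ n, ‖w (n + 1) - w n‖ ≤ ‖x (n + 1) - x n‖) (i k : ℕ) :
    ‖w (i + k) - w i‖ ≤ k * l * ‖w i - x i‖ := by
  induction k with
  | zero => simp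
  | succ k ih =>
    have hstep : ‖w (i + k + 1) - w (i + k)‖ ≤ l * ‖w i - x i‖ :=
      calc ‖w (i + k + 1) - w (i + k)‖ ≤ l * ‖w (i + k) - x (i + k)‖ :=
            (hw _).trans (norm_succ_sub_of_eq_smul_add hl0 hrec _).le
        _ ≤ l * ‖w i - x i‖ := by
            gcongr
            exact antitone_norm_sub_of_eq_smul_add hl0 hl1 hrec hw (Nat.le_add_right i k)
    calc ‖w (i + (k + 1)) - w i‖ ≤ ‖w (i + k + 1) - w (i + k)‖ + ‖w (i + k) - w i‖ :=
          norm_sub_le_norm_sub_add_norm_sub _ _ _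
      _ ≤ l * ‖w i - x i‖ + k * l * ‖w i - x i‖ := add_le_add hstep ih
      _ = (k + 1 : ℕ) * l * ‖w i - x i‖ := by push_cast; ring

theorem one_add_mul_mul_norm_sub_le (hl0 : 0 ≤ l) (hl1 : l < 1)
    (hrec : ∀ n, x (n + 1) = l • w n + (1 - l) • x n)
    (hw : ∀ n, ‖w (n + 1) - w n‖ ≤ ‖x (n + 1) - x n‖) (n i : ℕ) :
    (1 + n * l) * ‖w i - x i‖ ≤ ‖w (i + n) - x i‖ +
      (1 - l)⁻¹ ^ n * (‖w i - x i‖ - ‖w (i + n) - x (i + n)‖) := by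
  set a : ℕ → ℝ := fun n => ‖w n - x n‖
  induction n generalizing i with
  | zero => simp
  | succ n ih =>
    set m := i + (n + 1)
    set μ := (1 - l)⁻¹ ^ n
    have h1l : 0 < 1 - l := sub_pos.2 hl1
    have hμ : 1 + n * l ≤ μ := one_add_mul_le_inv_one_sub_pow hl0 hl1 n
    have ha_succ : a (i + 1) ≤ a i :=
      antitone_norm_sub_of_eq_smul_add hl0 hl1.le hrec hw (Nat.le_succ i)
    have hconvex := norm_sub_succ_le_of_eq_smul_add hl0 hl1.le hrec m i
    have hwm : l * ‖w m - w i‖ ≤ l * ((n + 1 : ℕ) * l * a i) := mul_le_mul_of_nonneg_left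
      (norm_add_sub_le_of_eq_smul_add hl0 hl1.le hrec hw i (n + 1)) hl0
    have hih : (1 + n * l) * a (i + 1) ≤ ‖w m - x (i + 1)‖ + μ * (a (i + 1) - a m) := by
      simpa only [m, add_assoc, add_comm 1 n] using ih (i + 1)
    refine le_of_mul_le_mul_left ?_ h1l
    -- `(1 - l) (1 + (n+1) l) = 1 + n l - (n+1) l²`; passing from `a i` to `a (i+1)` is paid for
    -- by `μ ≥ 1 + n l`.
    calc (1 - l) * ((1 + (n + 1 : ℕ) * l) * a i)
        ≤ (1 + n * l) * a (i + 1) - μ * (a (i + 1) - a m) - l * ((n + 1 : ℕ) * l * a i)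
          + μ * (a i - a m) := by
          push_cast
          nlinarith [mul_le_mul_of_nonneg_left (sub_nonneg.2 ha_succ) (sub_nonneg.2 hμ)]
      _ ≤ (1 - l) * ‖w m - x i‖ + μ * (a i - a m) := by linarith
      _ = (1 - l) * (‖w m - x i‖ + (1 - l)⁻¹ ^ (n + 1) * (a i - a m)) := by
          rw [pow_succ]; field_simp; ring

end

theorem goebel_kirk_general
    {X : Type*} [NormedAddCommGroup X] [NormedSpace ℝ X]
    (x w : ℕ → X)
    (hx_bdd : Bornology.IsBounded (Set.range x))
    (hw_bdd : Bornology.IsBounded (Set.range w))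
    (l : ℝ) (hl : l ∈ Set.Ioo (0 : ℝ) 1)
    (hrec : ∀ n : ℕ, x (n + 1) = l • w n + (1 - l) • x n)
    (hw : ∀ n : ℕ, ‖w (n + 1) - w n‖ ≤ ‖x (n + 1) - x n‖) :
    Filter.Tendsto (fun n => ‖w n - x n‖) Filter.atTop (nhds 0) := by
  obtain ⟨hl0, hl1⟩ := hl
  obtain ⟨M, hM⟩ := (isBounded_sub hw_bdd hx_bdd).exists_norm_le
  have hc : Tendsto (fun n : ℕ => 1 + n * l) atTop atTop :=
    tendsto_atTop_add_const_left _ _ (tendsto_natCast_atTop_atTop.atTop_mul_const hl0)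
  have hkey : ∀ n i, (1 + n * l) * ‖w i - x i‖ ≤
      M + (1 - l)⁻¹ ^ n * (‖w i - x i‖ - ‖w (i + n) - x (i + n)‖) := fun n i =>
    (one_add_mul_mul_norm_sub_le hl0.le hl1 hrec hw n i).trans <| add_le_add_left
      (hM _ (Set.sub_mem_sub (Set.mem_range_self _) (Set.mem_range_self _))) _
  exact (antitone_norm_sub_of_eq_smul_add hl0.le hl1.le hrec hw
    ).tendsto_atTop_zero_of_mul_le (fun n => norm_nonneg _) hc hkey

/-- Goebel–Kirk lemma: if `x` and `w` are bounded sequences in a real Banach space,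
`x (n+1) = λ • w n + (1 - λ) • x n` with `λ ∈ (0,1)`, and
`‖w (n+1) - w n‖ ≤ ‖x (n+1) - x n‖` for all `n`, then `‖w n - x n‖ → 0`. -/
theorem goebel_kirk
    {X : Type*} [NormedAddCommGroup X] [NormedSpace ℝ X] [CompleteSpace X]
    (x w : ℕ → X)
    (hx_bdd : Bornology.IsBounded (Set.range x))
    (hw_bdd : Bornology.IsBounded (Set.range w))
    (l : ℝ) (hl : l ∈ Set.Ioo (0 : ℝ) 1)
    (hrec : ∀ n : ℕ, x (n + 1) = l • w n + (1 - l) • x n)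
    (hw : ∀ n : ℕ, ‖w (n + 1) - w n‖ ≤ ‖x (n + 1) - x n‖) :
    Filter.Tendsto (fun n => ‖w n - x n‖) Filter.atTop (nhds 0) :=
  goebel_kirk_general x w hx_bdd hw_bdd l hl hrec hw
end

section
/- Let C be a nonempty subset of a real Banach space X, let γ ∈ [0,1] and μ ∈ [0,1/2] with 2μ ≤ γ, and let T : C → X satisfy condition B_{γ,μ} on C. If z ∈ C is a fixed point of T (T z = z), then for all x ∈ C one has ‖z − Tx‖ ≤ ‖z − x‖. -/
/-- A mapping satisfying condition `B_{γ,μ}` is quasi-nonexpansive: if `z` is a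
fixed point of `T`, then `‖z - T x‖ ≤ ‖z - x‖` for all `x ∈ C`. -/
theorem quasi_nonexpansive_of_condB
    {X : Type*} [NormedAddCommGroup X] [NormedSpace ℝ X] [CompleteSpace X]
    (C : Set X) (hC : C.Nonempty)
    (γ μ : ℝ) (hγ : γ ∈ Set.Icc (0 : ℝ) 1) (hμ : μ ∈ Set.Icc (0 : ℝ) (1 / 2))
    (hμγ : 2 * μ ≤ γ)
    (T : X → X)
    (hB : ∀ x ∈ C, ∀ y ∈ C,
      γ * ‖x - T x‖ ≤ ‖x - y‖ + μ * ‖y - T y‖ →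
        ‖T x - T y‖ ≤ (1 - γ) * ‖x - y‖ + μ * (‖x - T y‖ + ‖y - T x‖))
    (z : X) (hz : z ∈ C) (hfix : T z = z) :
    ∀ x ∈ C, ‖z - T x‖ ≤ ‖z - x‖ := by
  intro x hx
  have hcond : γ * ‖z - T z‖ ≤ ‖z - x‖ + μ * ‖x - T x‖ := by
    rw [hfix]
    simp
    nlinarith [norm_nonneg (z - x), norm_nonneg (x - T x), hμ.1]
  have h := hB z hz x hx hcond
  rw [hfix] at h
  have hxz : ‖x - z‖ = ‖z - x‖ := norm_sub_rev x z
  rw [hxz] at h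
  nlinarith [norm_nonneg (z - T x), norm_nonneg (z - x), hγ.1, hγ.2, hμ.1, hμ.2]
end

section
/- Let C be a nonempty subset of a real Banach space X, let γ ∈ [0,1] and μ ∈ [0,1/2] with 2μ ≤ γ, and let T : C → C satisfy condition B_{γ,μ} on C. Then for all x ∈ C, ‖Tx − T²x‖ ≤ ‖x − Tx‖. -/
/-- For a self-map `T` of `C` satisfying condition `B_{γ,μ}`, one has
`‖T x - T² x‖ ≤ ‖x - T x‖` for all `x ∈ C`. -/
theorem condB_norm_iterate_le
    {X : Type*} [NormedAddCommGroup X] [NormedSpace ℝ X] [CompleteSpace X]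
    (C : Set X) (hC : C.Nonempty)
    (γ μ : ℝ) (hγ : γ ∈ Set.Icc (0 : ℝ) 1) (hμ : μ ∈ Set.Icc (0 : ℝ) (1 / 2))
    (hμγ : 2 * μ ≤ γ)
    (T : X → X) (hmaps : Set.MapsTo T C C)
    (hB : ∀ x ∈ C, ∀ y ∈ C,
      γ * ‖x - T x‖ ≤ ‖x - y‖ + μ * ‖y - T y‖ →
        ‖T x - T y‖ ≤ (1 - γ) * ‖x - y‖ + μ * (‖x - T y‖ + ‖y - T x‖)) :
    ∀ x ∈ C, ‖T x - T (T x)‖ ≤ ‖x - T x‖ := by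
  intro x hx
  obtain ⟨hγ0, hγ1⟩ := hγ
  obtain ⟨hμ0, hμh⟩ := hμ
  have hTx : T x ∈ C := hmaps hx
  have hpre : γ * ‖x - T x‖ ≤ ‖x - T x‖ + μ * ‖T x - T (T x)‖ := by
    nlinarith [norm_nonneg (x - T x), norm_nonneg (T x - T (T x))]
  have h := hB x hx (T x) hTx hpre
  have htri : ‖x - T (T x)‖ ≤ ‖x - T x‖ + ‖T x - T (T x)‖ := by
    have := norm_sub_le_norm_sub_add_norm_sub x (T x) (T (T x))
    linarith
  simp only [sub_self, norm_zero] at h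
  nlinarith [norm_nonneg (x - T x), norm_nonneg (T x - T (T x)), norm_nonneg (x - T (T x))]
end

section
/- Let C be a nonempty subset of a real Banach space X, let γ ∈ [0,1] and μ ∈ [0,1/2] with 2μ ≤ γ, and let T : C → C satisfy condition B_{γ,μ} on C. Then for all x, y ∈ C and every θ ∈ [0,1], at least one of the following holds: (a) (θ/2)‖x − Tx‖ ≤ ‖x − y‖, or (b) (θ/2)‖Tx − T²x‖ ≤ ‖Tx − y‖. Moreover, if (a) holds then ‖Tx − Ty‖ ≤ (1 − θ/2)‖x − y‖ + μ(‖x − Ty‖ + ‖y − Tx‖), and if (b) holds then ‖T²x − Ty‖ ≤ (1 − θ/2)‖Tx − y‖ + μ(‖Tx − Ty‖ + ‖y − T²x‖). -/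
/-- Dichotomy property of maps satisfying condition `B_{γ,μ}` with `γ = θ/2`:
for all `x, y ∈ C`, either `(θ/2)‖x - Tx‖ ≤ ‖x - y‖` or
`(θ/2)‖Tx - T²x‖ ≤ ‖Tx - y‖`; moreover each alternative yields the
corresponding inequality. -/
theorem condB_dichotomy
    {X : Type*} [NormedAddCommGroup X] [NormedSpace ℝ X] [CompleteSpace X]
    (C : Set X) (hC : C.Nonempty)
    (θ γ μ : ℝ) (hθ : θ ∈ Set.Icc (0 : ℝ) 1) (hγθ : γ = θ / 2)
    (hγ : γ ∈ Set.Icc (0 : ℝ) 1) (hμ : μ ∈ Set.Icc (0 : ℝ) (1 / 2))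
    (hμγ : 2 * μ ≤ γ)
    (T : X → X) (hmaps : Set.MapsTo T C C)
    (hB : ∀ x ∈ C, ∀ y ∈ C,
      γ * ‖x - T x‖ ≤ ‖x - y‖ + μ * ‖y - T y‖ →
        ‖T x - T y‖ ≤ (1 - γ) * ‖x - y‖ + μ * (‖x - T y‖ + ‖y - T x‖)) :
    ∀ x ∈ C, ∀ y ∈ C,
      ((θ / 2) * ‖x - T x‖ ≤ ‖x - y‖ ∨ (θ / 2) * ‖T x - T (T x)‖ ≤ ‖T x - y‖) ∧
      ((θ / 2) * ‖x - T x‖ ≤ ‖x - y‖ →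
        ‖T x - T y‖ ≤ (1 - θ / 2) * ‖x - y‖ + μ * (‖x - T y‖ + ‖y - T x‖)) ∧
      ((θ / 2) * ‖T x - T (T x)‖ ≤ ‖T x - y‖ →
        ‖T (T x) - T y‖ ≤ (1 - θ / 2) * ‖T x - y‖
          + μ * (‖T x - T y‖ + ‖y - T (T x)‖)) := by
  intro x hx y hy
  subst hγθ
  obtain ⟨hθ0, hθ1⟩ := hθ
  obtain ⟨hμ0, hμ2⟩ := hμ
  have hTx : T x ∈ C := hmaps hx
  -- key estimate: ‖Tx - T²x‖ ≤ ‖x - Tx‖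
  have hkey : ‖T x - T (T x)‖ ≤ ‖x - T x‖ := by
    have h1 : θ / 2 * ‖x - T x‖ ≤ ‖x - T x‖ + μ * ‖T x - T (T x)‖ := by
      nlinarith [norm_nonneg (x - T x), norm_nonneg (T x - T (T x))]
    have h2 := hB x hx (T x) hTx h1
    have h3 : ‖x - T (T x)‖ ≤ ‖x - T x‖ + ‖T x - T (T x)‖ :=
      norm_sub_le_norm_sub_add_norm_sub x (T x) (T (T x))
    simp only [sub_self, norm_zero] at h2
    nlinarith [norm_nonneg (x - T x), norm_nonneg (T x - T (T x))]
  refine ⟨?_, ?_, ?_⟩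
  · by_contra h
    push_neg at h
    obtain ⟨ha, hb⟩ := h
    have htri : ‖x - T x‖ ≤ ‖x - y‖ + ‖y - T x‖ := norm_sub_le_norm_sub_add_norm_sub x y (T x)
    have hyTx : ‖y - T x‖ = ‖T x - y‖ := norm_sub_rev _ _
    nlinarith [norm_nonneg (x - T x), norm_nonneg (T x - T (T x)), norm_nonneg (x - y), norm_nonneg (T x - y)]
  · intro ha
    exact hB x hx y hy (ha.trans (by nlinarith [norm_nonneg (y - T y)]))
  · intro hb
    exact hB (T x) hTx y hy (hb.trans (by nlinarith [norm_nonneg (y - T y)]))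
end

section
/- Let C be a nonempty subset of a real Banach space X, let γ ∈ [0,1] and μ ∈ [0,1/2] with 2μ ≤ γ, and let T : C → C satisfy condition B_{γ,μ} on C with γ = θ/2 for some θ ∈ [0,1]. Then for all x, y ∈ C: ‖x − Ty‖ ≤ (3 − θ)‖x − Tx‖ + (1 − θ/2)‖x − y‖ + μ(2‖x − Tx‖ + ‖x − Ty‖ + ‖y − Tx‖ + 2‖Tx − T²x‖). -/
/-- Estimate for maps satisfying condition `B_{γ,μ}` with `γ = θ/2`:
`‖x - Ty‖ ≤ (3 - θ)‖x - Tx‖ + (1 - θ/2)‖x - y‖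
  + μ(2‖x - Tx‖ + ‖x - Ty‖ + ‖y - Tx‖ + 2‖Tx - T²x‖)`. -/
theorem condB_estimate
    {X : Type*} [NormedAddCommGroup X] [NormedSpace ℝ X] [CompleteSpace X]
    (C : Set X) (hC : C.Nonempty)
    (θ γ μ : ℝ) (hθ : θ ∈ Set.Icc (0 : ℝ) 1) (hγθ : γ = θ / 2)
    (hγ : γ ∈ Set.Icc (0 : ℝ) 1) (hμ : μ ∈ Set.Icc (0 : ℝ) (1 / 2))
    (hμγ : 2 * μ ≤ γ)
    (T : X → X) (hmaps : Set.MapsTo T C C)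
    (hB : ∀ x ∈ C, ∀ y ∈ C,
      γ * ‖x - T x‖ ≤ ‖x - y‖ + μ * ‖y - T y‖ →
        ‖T x - T y‖ ≤ (1 - γ) * ‖x - y‖ + μ * (‖x - T y‖ + ‖y - T x‖)) :
    ∀ x ∈ C, ∀ y ∈ C,
      ‖x - T y‖ ≤ (3 - θ) * ‖x - T x‖ + (1 - θ / 2) * ‖x - y‖
        + μ * (2 * ‖x - T x‖ + ‖x - T y‖ + ‖y - T x‖ + 2 * ‖T x - T (T x)‖) := by
  intro x hx y hy
  obtain ⟨hγ0, hγ1⟩ := hγ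
  obtain ⟨hμ0, hμ12⟩ := hμ
  obtain ⟨hθ0, hθ1⟩ := hθ
  have hθγ : θ = 2 * γ := by rw [hγθ]; ring
  have hTx : T x ∈ C := hmaps hx
  have hTTx : T (T x) ∈ C := hmaps hTx
  -- key: (1-μ)‖Tx - T²x‖ ≤ (1-γ+μ)‖x - Tx‖
  have trig0 : γ * ‖x - T x‖ ≤ ‖x - T x‖ + μ * ‖T x - T (T x)‖ := by
    nlinarith [norm_nonneg (x - T x), norm_nonneg (T x - T (T x))]
  have hkey0 := hB x hx (T x) hTx trig0
  have hzero : ‖T x - T x‖ = (0 : ℝ) := by simp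
  have htri0 : ‖x - T (T x)‖ ≤ ‖x - T x‖ + ‖T x - T (T x)‖ := by
    have h1 : x - T (T x) = (x - T x) + (T x - T (T x)) := by abel
    rw [h1]; exact norm_add_le _ _
  have hkey : (1 - μ) * ‖T x - T (T x)‖ ≤ (1 - γ + μ) * ‖x - T x‖ := by
    rw [hzero] at hkey0
    nlinarith [hkey0, htri0]
  have ha := norm_nonneg (x - T x)
  have he := norm_nonneg (T x - T (T x))
  have hc := norm_nonneg (x - T y)
  have hd := norm_nonneg (y - T x)
  by_cases hcase : γ * ‖x - T x‖ ≤ ‖x - y‖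
  · -- apply B at (x, y)
    have trig : γ * ‖x - T x‖ ≤ ‖x - y‖ + μ * ‖y - T y‖ := by
      have := mul_nonneg hμ0 (norm_nonneg (y - T y)); linarith
    have h1 := hB x hx y hy trig
    have h2 : ‖x - T y‖ ≤ ‖x - T x‖ + ‖T x - T y‖ := by
      have h3 : x - T y = (x - T x) + (T x - T y) := by abel
      rw [h3]; exact norm_add_le _ _
    have h4 : (0:ℝ) ≤ (1 - γ) * ‖x - T x‖ := by
      apply mul_nonneg (by linarith) ha
    have h5 : (0:ℝ) ≤ μ * ‖x - T x‖ := mul_nonneg hμ0 ha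
    have h6 : (0:ℝ) ≤ μ * ‖T x - T (T x)‖ := mul_nonneg hμ0 he
    rw [hθγ]
    linarith
  · push_neg at hcase
    have hγ12 : γ ≤ 1/2 := by rw [hγθ]; linarith
    -- ‖Tx - T²x‖ ≤ ‖x - Tx‖
    have hee : ‖T x - T (T x)‖ ≤ ‖x - T x‖ := by
      nlinarith [hkey]
    -- trigger at (Tx, y)
    have htri1 : ‖x - T x‖ ≤ ‖x - y‖ + ‖y - T x‖ := by
      have h1 : x - T x = (x - y) + (y - T x) := by abel
      rw [h1]; exact norm_add_le _ _
    have hrev : ‖T x - y‖ = ‖y - T x‖ := norm_sub_rev _ _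
    have trig : γ * ‖T x - T (T x)‖ ≤ ‖T x - y‖ + μ * ‖y - T y‖ := by
      have h1 : γ * ‖T x - T (T x)‖ ≤ γ * ‖x - T x‖ :=
        mul_le_mul_of_nonneg_left hee hγ0
      have h2 : (0:ℝ) ≤ μ * ‖y - T y‖ := mul_nonneg hμ0 (norm_nonneg _)
      -- γ‖x-Tx‖ ≤ (1-γ)‖x-Tx‖ ≤ ‖x-Tx‖ - ‖x-y‖ ≤ ‖y-Tx‖
      nlinarith [htri1, hcase]
    have hB2 := hB (T x) hTx y hy trig
    -- triangle chains
    have t1 : ‖x - T y‖ ≤ ‖x - T (T x)‖ + ‖T (T x) - T y‖ := by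
      have h1 : x - T y = (x - T (T x)) + (T (T x) - T y) := by abel
      rw [h1]; exact norm_add_le _ _
    have t2 : ‖T x - y‖ ≤ ‖x - T x‖ + ‖x - y‖ := by
      have h1 : T x - y = (T x - x) + (x - y) := by abel
      calc ‖T x - y‖ ≤ ‖T x - x‖ + ‖x - y‖ := by rw [h1]; exact norm_add_le _ _
        _ = ‖x - T x‖ + ‖x - y‖ := by rw [norm_sub_rev]
    have t3 : ‖T x - T y‖ ≤ ‖x - T x‖ + ‖x - T y‖ := by
      have h1 : T x - T y = (T x - x) + (x - T y) := by abel
      calc ‖T x - T y‖ ≤ ‖T x - x‖ + ‖x - T y‖ := by rw [h1]; exact norm_add_le _ _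
        _ = ‖x - T x‖ + ‖x - T y‖ := by rw [norm_sub_rev]
    have t4 : ‖y - T (T x)‖ ≤ ‖y - T x‖ + ‖T x - T (T x)‖ := by
      have h1 : y - T (T x) = (y - T x) + (T x - T (T x)) := by abel
      rw [h1]; exact norm_add_le _ _
    -- multiply by nonneg coefficients
    have m1 : (1 - γ) * ‖T x - y‖ ≤ (1 - γ) * (‖x - T x‖ + ‖x - y‖) :=
      mul_le_mul_of_nonneg_left t2 (by linarith)
    have m2 : μ * ‖T x - T y‖ ≤ μ * (‖x - T x‖ + ‖x - T y‖) :=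
      mul_le_mul_of_nonneg_left t3 hμ0
    have m3 : μ * ‖y - T (T x)‖ ≤ μ * (‖y - T x‖ + ‖T x - T (T x)‖) :=
      mul_le_mul_of_nonneg_left t4 hμ0
    rw [hθγ]
    linarith [hB2, t1, htri0, hkey, m1, m2, m3]
end

section
/- Let X be a uniformly convex real Banach space and let C be a nonempty convex subset of X that is compact in the weak topology of X. Let γ ∈ [0,1] and μ ∈ [0,1/2] with 2μ ≤ γ, and let T : C → C satisfy condition B_{γ,μ} on C. Then T has a fixed point in C. -/
/-!
Condition `B_{γ,μ}` implies condition (E) of García-Falset, Llorens-Fuster and Suzuki,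
`‖x - T y‖ ≤ K ‖x - T x‖ + ‖x - y‖` on `C`, and we follow their argument. The weakly compact
set `C` is bounded, and `T` has approximate fixed points: for `γ = 0` it is nonexpansive and one
uses the contractions `η c + (1 - η) T`; for `γ > 0` the Picard iterates work, because by uniform
convexity their steps `d n = T^[n] c - T^[n+1] c` have `d n - d (n+1) → 0`, and a bounded
sequence whose second differences tend to `0` has first differences tending to `0`.
Given approximate fixed points `x n`, the asymptotic radius `w ↦ limsup ‖w - x n‖` is convex
and continuous, hence attains its minimum on the weakly compact convex set `C` at some `z`.
Condition (E) makes `T z` a minimiser too, and if `T z ≠ z`, uniform convexity makes their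
midpoint a strictly better point of `C`.
-/

open Bornology Filter Function Set Topology

section FixedPointTheory

variable {X : Type*} [NormedAddCommGroup X]

theorem isBounded_of_isCompact_toWeakSpace_image [NormedSpace ℝ X] {C : Set X}
    (hC : IsCompact (toWeakSpace ℝ X '' C)) : IsBounded C := by
  have h := WeakDual.isBounded_iff_isVonNBounded.mpr
    ((hC.image (NormedSpace.inclusionInDoubleDualWeak ℝ X).continuous).isVonNBounded ℝ)
  rw [← WeakDual.isBounded_toWeakDual_preimage_iff_isBounded] at h
  obtain ⟨M, hM⟩ := h.exists_norm_le
  refine isBounded_iff_forall_norm_le.2 ⟨M, fun x hx => ?_⟩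
  rw [← (NormedSpace.inclusionInDoubleDualLi (𝕜 := ℝ) (E := X)).norm_map x]
  exact hM _ ⟨_, ⟨x, hx, rfl⟩, rfl⟩

theorem Convex.isClosed_toWeakSpace_image [NormedSpace ℝ X] {s : Set X} (hs : Convex ℝ s)
    (hc : IsClosed s) : IsClosed (toWeakSpace ℝ X '' s) := by
  rw [← hc.closure_eq, hs.toWeakSpace_closure (𝕜 := ℝ)]
  exact isClosed_closure

theorem ConvexOn.exists_isMinOn_of_isCompact_toWeakSpace_image [NormedSpace ℝ X] {f : X → ℝ}
    (hf : ConvexOn ℝ univ f) (hcont : Continuous f) {C : Set X}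
    (hC : IsCompact (toWeakSpace ℝ X '' C)) (hne : C.Nonempty) : ∃ z ∈ C, IsMinOn f C z := by
  have hlsc : LowerSemicontinuous (f ∘ (toWeakSpace ℝ X).symm) := by
    refine lowerSemicontinuous_iff_isClosed_preimage.2 fun b => ?_
    rw [preimage_comp, ← LinearEquiv.image_eq_preimage_symm]
    have hconv : Convex ℝ {x | f x ≤ b} := by simpa using hf.convex_le b
    exact hconv.isClosed_toWeakSpace_image (isClosed_le hcont continuous_const)
  obtain ⟨_, ⟨z, hz, rfl⟩, hmin⟩ :=
    (hlsc.lowerSemicontinuousOn _).exists_isMinOn (hne.image _) hC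
  exact ⟨z, hz, fun y hy => by simpa using hmin (mem_image_of_mem _ hy)⟩

theorem exists_forall_norm_add_le_two_sub_mul [NormedSpace ℝ X] [UniformConvexSpace X] {ε : ℝ}
    (hε : 0 < ε) :
    ∃ δ > 0, ∀ R > 0, ∀ u v : X, ‖u‖ ≤ R → ‖v‖ ≤ R → ε * R ≤ ‖u - v‖ →
      ‖u + v‖ ≤ (2 - δ) * R := by
  obtain ⟨δ, hδ, h⟩ := exists_forall_closed_ball_dist_add_le_two_sub X hε
  refine ⟨δ, hδ, fun R hR u v hu hv huv => ?_⟩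
  have hscale (w : X) : ‖R⁻¹ • w‖ = ‖w‖ / R := by
    rw [norm_smul_of_nonneg (inv_nonneg.2 hR.le), inv_mul_eq_div]
  have := @h (R⁻¹ • u) (by rwa [hscale, div_le_one hR]) (R⁻¹ • v)
    (by rwa [hscale, div_le_one hR]) (by rwa [← smul_sub, hscale, le_div_iff₀ hR])
  rwa [← smul_add, hscale, div_le_iff₀ hR] at this

theorem tendsto_sub_succ_of_isBounded_range [NormedSpace ℝ X] {x : ℕ → X}
    (hx : IsBounded (range x))
    (h : Tendsto (fun n => (x n - x (n + 1)) - (x (n + 1) - x (n + 2))) atTop (𝓝 0)) :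
    Tendsto (fun n => x n - x (n + 1)) atTop (𝓝 0) := by
  set d : ℕ → X := fun n => x n - x (n + 1)
  rw [NormedAddGroup.tendsto_nhds_zero] at h ⊢
  intro η hη
  obtain ⟨B, hB⟩ := hx.exists_norm_le
  have hB0 : 0 ≤ B := (norm_nonneg _).trans (hB _ (mem_range_self 0))
  obtain ⟨m, hm⟩ := exists_nat_gt (4 * B / η)
  rw [div_lt_iff₀ hη] at hm
  have hm0 : (0 : ℝ) < m := pos_of_mul_pos_left (hm.trans_le' (by positivity)) hη.le
  set ε := η / (2 * m)
  obtain ⟨N₀, hN₀⟩ := eventually_atTop.1 (h ε (by positivity))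
  refine eventually_atTop.2 ⟨N₀, fun N hN => ?_⟩
  have hdrift (i : ℕ) : ‖d N - d (N + i)‖ ≤ i * ε := by
    rw [← dist_eq_norm]
    calc dist (d N) (d (N + i)) ≤ ∑ j ∈ Finset.range i, dist (d (N + j)) (d (N + j + 1)) :=
          dist_le_range_sum_dist (fun j => d (N + j)) i
      _ ≤ ∑ _j ∈ Finset.range i, ε :=
          Finset.sum_le_sum fun j _ => by
            rw [dist_eq_norm]; exact (hN₀ (N + j) (by omega)).le
      _ = i * ε := by simp
  have hsplit :
      (m : ℝ) • d N = (x N - x (N + m)) + ∑ i ∈ Finset.range m, (d N - d (N + i)) := by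
    have htel : ∑ i ∈ Finset.range m, d (N + i) = x N - x (N + m) :=
      Finset.sum_range_sub' (fun i => x (N + i)) m
    rw [Finset.sum_sub_distrib, htel, Finset.sum_const, Finset.card_range, Nat.cast_smul_eq_nsmul]
    abel
  have hbound : m * ‖d N‖ ≤ 2 * B + m * (m * ε) := by
    calc m * ‖d N‖ = ‖(m : ℝ) • d N‖ := by rw [norm_smul, Real.norm_natCast]
      _ ≤ ‖x N - x (N + m)‖ + ∑ i ∈ Finset.range m, ‖d N - d (N + i)‖ := by
          rw [hsplit]; exact (norm_add_le _ _).trans (by gcongr; exact norm_sum_le _ _)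
      _ ≤ (B + B) + ∑ _i ∈ Finset.range m, m * ε := by
          gcongr with i hi
          · exact (norm_sub_le _ _).trans
              (add_le_add (hB _ (mem_range_self _)) (hB _ (mem_range_self _)))
          · exact (hdrift i).trans (by gcongr; exact_mod_cast (Finset.mem_range.1 hi).le)
      _ = 2 * B + m * (m * ε) := by simp; ring
  have : (m : ℝ) * ε = η / 2 := by simp only [ε]; field_simp
  nlinarith

theorem tendsto_sub_succ_of_norm_succ_le [NormedSpace ℝ X] [UniformConvexSpace X] {γ μ : ℝ}
    (hγ : 0 < γ) (hγ1 : γ ≤ 1) (hμ : 0 ≤ μ) (hμγ : 2 * μ ≤ γ) {d : ℕ → X}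
    (h : ∀ n, ‖d (n + 1)‖ ≤ (1 - γ) * ‖d n‖ + μ * ‖d n + d (n + 1)‖) :
    Tendsto (fun n => d n - d (n + 1)) atTop (𝓝 0) := by
  have hanti : Antitone (fun n => ‖d n‖) := antitone_nat_of_succ_le fun n => by
    have := mul_le_mul_of_nonneg_left (norm_add_le (d n) (d (n + 1))) hμ
    nlinarith [h n, norm_nonneg (d n)]
  have hbdd : BddBelow (range fun n => ‖d n‖) := ⟨0, by rintro _ ⟨n, rfl⟩; exact norm_nonneg _⟩
  set r := ⨅ n, ‖d n‖
  have hlim : Tendsto (fun n => ‖d n‖) atTop (𝓝 r) := tendsto_atTop_ciInf hanti hbdd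
  have hr_le (n : ℕ) : r ≤ ‖d n‖ := ciInf_le hbdd n
  rcases (le_ciInf fun n => norm_nonneg (d n) : 0 ≤ r).eq_or_lt with hr | hr
  · rw [show r = 0 from hr.symm] at hlim
    refine squeeze_zero_norm (fun n => norm_sub_le _ _) ?_
    simpa using hlim.add (hlim.comp (tendsto_add_atTop_nat 1))
  rw [NormedAddGroup.tendsto_nhds_zero]
  intro ε hε
  obtain ⟨δ, hδ, huc⟩ :=
    exists_forall_norm_add_le_two_sub_mul (X := X) (div_pos hε (hr.trans_le (hr_le 0)))
  -- a step on which `d` moves by `ε` shrinks `‖d‖` by the factor `1 - c`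
  set c := γ - 2 * μ + μ * δ
  have hc : 0 < c := by
    rcases hμ.eq_or_lt with rfl | hμ
    · simpa [c] using hγ
    · nlinarith [mul_pos hμ hδ]
  filter_upwards [hlim.eventually (gt_mem_nhds (lt_add_of_pos_right r (mul_pos hc hr)))]
    with n hn
  by_contra! hbig
  have hpos : 0 < ‖d n‖ := hr.trans_le (hr_le n)
  have hsum : ‖d n + d (n + 1)‖ ≤ (2 - δ) * ‖d n‖ := by
    refine huc _ hpos _ _ le_rfl (hanti n.le_succ) (le_trans ?_ hbig)
    calc ε / ‖d 0‖ * ‖d n‖ ≤ ε / ‖d 0‖ * ‖d 0‖ := by gcongr; exact hanti (Nat.zero_le n)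
      _ = ε := div_mul_cancel₀ _ (hpos.trans_le (hanti (Nat.zero_le n))).ne'
  nlinarith [h n, hr_le (n + 1), mul_le_mul_of_nonneg_left hsum hμ,
    mul_le_mul_of_nonneg_left (hr_le n) hc.le]

theorem norm_iterate_sub_iterate_succ_le_geometric {C : Set X} {S : X → X} {q : ℝ} (hq : 0 ≤ q)
    (hmaps : MapsTo S C C) (hS : ∀ x ∈ C, ∀ y ∈ C, ‖S x - S y‖ ≤ q * ‖x - y‖) {c : X}
    (hc : c ∈ C) (n : ℕ) : ‖S^[n] c - S^[n + 1] c‖ ≤ q ^ n * ‖c - S c‖ := by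
  induction n with
  | zero => simp
  | succ n ih =>
    rw [iterate_succ_apply', iterate_succ_apply' S (n + 1), pow_succ', mul_assoc]
    exact (hS _ (hmaps.iterate n hc) _ (hmaps.iterate (n + 1) hc)).trans
      (mul_le_mul_of_nonneg_left ih hq)

theorem exists_norm_sub_apply_lt_of_nonexpansive [NormedSpace ℝ X] {C : Set X} {T : X → X}
    (hconv : Convex ℝ C) (hC : IsBounded C) (hmaps : MapsTo T C C)
    (hT : ∀ x ∈ C, ∀ y ∈ C, ‖T x - T y‖ ≤ ‖x - y‖) {c : X} (hc : c ∈ C) {ε : ℝ} (hε : 0 < ε) :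
    ∃ x ∈ C, ‖x - T x‖ < ε := by
  set D := Metric.diam C
  have hD : ∀ x ∈ C, ∀ y ∈ C, ‖x - y‖ ≤ D := fun x hx y hy => by
    rw [← dist_eq_norm]; exact Metric.dist_le_diam_of_mem hC hx hy
  set η := min 1 (ε / (2 * (D + 1)))
  have hη : 0 < η := lt_min one_pos (by positivity)
  have hη1 : η ≤ 1 := min_le_left _ _
  set S : X → X := fun p => η • c + (1 - η) • T p
  have hSmaps : MapsTo S C C := fun p hp => hconv hc (hmaps hp) hη.le (by linarith) (by ring)
  have hS : ∀ x ∈ C, ∀ y ∈ C, ‖S x - S y‖ ≤ (1 - η) * ‖x - y‖ := fun x hx y hy => by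
    have : S x - S y = (1 - η) • (T x - T y) := by simp only [S]; module
    rw [this, norm_smul_of_nonneg (by linarith)]
    exact mul_le_mul_of_nonneg_left (hT x hx y hy) (by linarith)
  obtain ⟨n, hn⟩ := (((tendsto_pow_atTop_nhds_zero_of_lt_one (by linarith) (by linarith :
    1 - η < 1)).mul_const D).eventually (gt_mem_nhds (by rw [zero_mul]; exact half_pos hε))).exists
  set p := S^[n] c
  have hp : p ∈ C := hSmaps.iterate n hc
  have hpS : ‖p - S p‖ < ε / 2 := by
    rw [← iterate_succ_apply' S]
    calc _ ≤ (1 - η) ^ n * ‖c - S c‖ :=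
          norm_iterate_sub_iterate_succ_le_geometric (by linarith) hSmaps hS hc n
      _ ≤ (1 - η) ^ n * D := by gcongr; exact hD c hc (S c) (hSmaps hc)
      _ < ε / 2 := hn
  have hηD : η * D ≤ ε / 2 :=
    calc η * D ≤ ε / (2 * (D + 1)) * (D + 1) := by
          gcongr
          exacts [min_le_right _ _, le_add_of_nonneg_right zero_le_one]
      _ = ε / 2 := by
          have : D + 1 ≠ 0 := by positivity
          field_simp
  have hSp : S p - T p = η • (c - T p) := by simp only [S]; module
  refine ⟨p, hp, ?_⟩
  calc ‖p - T p‖ ≤ ‖p - S p‖ + ‖S p - T p‖ := norm_sub_le_norm_sub_add_norm_sub _ _ _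
    _ < ε / 2 + η * D := by
        rw [hSp, norm_smul_of_nonneg hη.le]
        exact add_lt_add_of_lt_of_le hpS (by gcongr; exact hD c hc (T p) (hmaps hp))
    _ ≤ ε := by linarith

section AsymptoticRadius

noncomputable def asymptoticRadius (x : ℕ → X) (w : X) : ℝ := limsup (fun n => ‖w - x n‖) atTop

variable {x : ℕ → X}

theorem asymptoticRadius_le_of_eventually_le {w : X} {b : ℝ}
    (h : ∀ᶠ n in atTop, ‖w - x n‖ ≤ b) : asymptoticRadius x w ≤ b :=
  limsup_le_of_le (isCoboundedUnder_le_of_le atTop fun _ => norm_nonneg _) h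

theorem asymptoticRadius_le_of_forall_eventually_le {w : X} {b : ℝ}
    (h : ∀ ε > 0, ∀ᶠ n in atTop, ‖w - x n‖ ≤ b + ε) : asymptoticRadius x w ≤ b :=
  le_of_forall_pos_le_add fun ε hε => asymptoticRadius_le_of_eventually_le (h ε hε)

theorem eventually_norm_sub_lt_asymptoticRadius_add (hx : IsBounded (range x)) (w : X)
    {ε : ℝ} (hε : 0 < ε) : ∀ᶠ n in atTop, ‖w - x n‖ < asymptoticRadius x w + ε := by
  obtain ⟨M, hM⟩ := hx.exists_norm_le
  refine eventually_lt_of_limsup_lt (lt_add_of_pos_right _ hε)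
    (isBoundedUnder_of ⟨‖w‖ + M, fun n => ?_⟩)
  exact (norm_sub_le _ _).trans (by gcongr; exact hM _ (mem_range_self n))

theorem lipschitzWith_asymptoticRadius (hx : IsBounded (range x)) :
    LipschitzWith 1 (asymptoticRadius x) :=
  LipschitzWith.of_le_add fun w w' => asymptoticRadius_le_of_forall_eventually_le fun ε hε => by
    filter_upwards [eventually_norm_sub_lt_asymptoticRadius_add hx w' hε] with n hn
    rw [dist_eq_norm]
    linarith [norm_sub_le_norm_sub_add_norm_sub w w' (x n)]

theorem convexOn_asymptoticRadius [NormedSpace ℝ X] (hx : IsBounded (range x)) :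
    ConvexOn ℝ univ (asymptoticRadius x) := by
  refine ⟨convex_univ, fun w _ w' _ p q hp hq hpq =>
    asymptoticRadius_le_of_forall_eventually_le fun ε hε => ?_⟩
  filter_upwards [eventually_norm_sub_lt_asymptoticRadius_add hx w hε,
    eventually_norm_sub_lt_asymptoticRadius_add hx w' hε] with n hw hw'
  calc ‖p • w + q • w' - x n‖ = ‖p • (w - x n) + q • (w' - x n)‖ := by
        rw [smul_sub, smul_sub, sub_add_sub_comm, ← add_smul, hpq, one_smul]
    _ ≤ p * ‖w - x n‖ + q * ‖w' - x n‖ := by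
        rw [← norm_smul_of_nonneg hp, ← norm_smul_of_nonneg hq]
        exact norm_add_le _ _
    _ ≤ p * (asymptoticRadius x w + ε) + q * (asymptoticRadius x w' + ε) := by gcongr
    _ = p • asymptoticRadius x w + q • asymptoticRadius x w' + ε := by
        simp only [smul_eq_mul]
        linear_combination ε * hpq

theorem asymptoticRadius_midpoint_lt [NormedSpace ℝ X] [UniformConvexSpace X]
    (hx : IsBounded (range x)) {u v : X} (huv : u ≠ v) :
    asymptoticRadius x (midpoint ℝ u v) < max (asymptoticRadius x u) (asymptoticRadius x v) := by
  set r := max (asymptoticRadius x u) (asymptoticRadius x v)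
  have he : 0 < ‖u - v‖ := norm_pos_iff.2 (sub_ne_zero.2 huv)
  have hu (η : ℝ) (hη : 0 < η) : ∀ᶠ n in atTop, ‖u - x n‖ < r + η :=
    (eventually_norm_sub_lt_asymptoticRadius_add hx u hη).mono fun n hn =>
      hn.trans_le (by gcongr; exact le_max_left _ _)
  have hv (η : ℝ) (hη : 0 < η) : ∀ᶠ n in atTop, ‖v - x n‖ < r + η :=
    (eventually_norm_sub_lt_asymptoticRadius_add hx v hη).mono fun n hn =>
      hn.trans_le (by gcongr; exact le_max_right _ _)
  rcases le_or_gt r 0 with hr | hr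
  · obtain ⟨n, hun, hvn⟩ := ((hu _ (half_pos he)).and (hv _ (half_pos he))).exists
    have := norm_sub_le_norm_sub_add_norm_sub u (x n) v
    rw [norm_sub_rev (x n)] at this
    linarith
  obtain ⟨δ, hδ, huc⟩ :=
    exists_forall_norm_add_le_two_sub_mul (X := X) (div_pos he (by positivity : 0 < r + 1))
  set η := min 1 (δ * r / 4)
  have hη : 0 < η := lt_min one_pos (by positivity)
  have hmid : asymptoticRadius x (midpoint ℝ u v) ≤ (1 - δ / 2) * (r + η) := by
    refine asymptoticRadius_le_of_eventually_le ?_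
    filter_upwards [hu η hη, hv η hη] with n hun hvn
    have hsep : ‖u - v‖ / (r + 1) * (r + η) ≤ ‖(u - x n) - (v - x n)‖ := by
      rw [sub_sub_sub_cancel_right, div_mul_eq_mul_div, div_le_iff₀ (by positivity)]
      gcongr
      exact min_le_left _ _
    have key := huc (r + η) (by positivity) _ _ hun.le hvn.le hsep
    have hm : midpoint ℝ u v - x n = (2⁻¹ : ℝ) • ((u - x n) + (v - x n)) := by
      rw [midpoint_eq_smul_add, invOf_eq_inv]
      module
    rw [hm, norm_smul_of_nonneg (by norm_num)]
    linarith
  nlinarith [min_le_right 1 (δ * r / 4), mul_pos hδ hr, mul_nonneg hδ.le hη.le]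

end AsymptoticRadius

def SatisfiesConditionE (K : ℝ) (C : Set X) (T : X → X) : Prop :=
  ∀ x ∈ C, ∀ y ∈ C, ‖x - T y‖ ≤ K * ‖x - T x‖ + ‖x - y‖

namespace SatisfiesConditionE

variable {K : ℝ} {C : Set X} {T : X → X}

theorem asymptoticRadius_apply_le (hE : SatisfiesConditionE K C T) (hx : IsBounded (range x))
    (hxC : ∀ n, x n ∈ C) (hxT : Tendsto (fun n => ‖x n - T (x n)‖) atTop (𝓝 0)) {y : X}
    (hy : y ∈ C) : asymptoticRadius x (T y) ≤ asymptoticRadius x y := by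
  refine asymptoticRadius_le_of_forall_eventually_le fun ε hε => ?_
  have hK : ∀ᶠ n in atTop, K * ‖x n - T (x n)‖ < ε / 2 := by
    simpa using (hxT.const_mul K).eventually (gt_mem_nhds (by rw [mul_zero]; exact half_pos hε))
  filter_upwards [hK, eventually_norm_sub_lt_asymptoticRadius_add hx y (half_pos hε)]
    with n hKn hyn
  rw [norm_sub_rev]
  linarith [hE (x n) (hxC n) y hy, norm_sub_rev y (x n)]

theorem exists_fixedPoint [NormedSpace ℝ X] [UniformConvexSpace X]
    (hE : SatisfiesConditionE K C T) (hconv : Convex ℝ C) (hC : IsCompact (toWeakSpace ℝ X '' C))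
    (hmaps : MapsTo T C C) (hafp : ∀ ε > 0, ∃ x ∈ C, ‖x - T x‖ < ε) : ∃ z ∈ C, T z = z := by
  choose x hxC hxT using fun n : ℕ => hafp (1 / (n + 1)) Nat.one_div_pos_of_nat
  have hx : IsBounded (range x) :=
    (isBounded_of_isCompact_toWeakSpace_image hC).subset (range_subset_iff.2 hxC)
  have hxT' : Tendsto (fun n => ‖x n - T (x n)‖) atTop (𝓝 0) :=
    squeeze_zero (fun _ => norm_nonneg _) (fun n => (hxT n).le)
      tendsto_one_div_add_atTop_nhds_zero_nat
  obtain ⟨z, hzC, hzmin⟩ :=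
    (convexOn_asymptoticRadius hx).exists_isMinOn_of_isCompact_toWeakSpace_image
      (lipschitzWith_asymptoticRadius hx).continuous hC ⟨x 0, hxC 0⟩
  refine ⟨z, hzC, by_contra fun hne => ?_⟩
  have hlt := asymptoticRadius_midpoint_lt hx hne
  rw [max_eq_right (hE.asymptoticRadius_apply_le hx hxC hxT' hzC)] at hlt
  exact (isMinOn_iff.1 hzmin _ (hconv.midpoint_mem (hmaps hzC) hzC)).not_gt hlt

end SatisfiesConditionE

def SatisfiesConditionB (γ μ : ℝ) (C : Set X) (T : X → X) : Prop :=
  ∀ x ∈ C, ∀ y ∈ C, γ * ‖x - T x‖ ≤ ‖x - y‖ + μ * ‖y - T y‖ →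
    ‖T x - T y‖ ≤ (1 - γ) * ‖x - y‖ + μ * (‖x - T y‖ + ‖y - T x‖)

namespace SatisfiesConditionB

variable {γ μ : ℝ} {C : Set X} {T : X → X}

theorem norm_sub_apply_le_of_premise (hB : SatisfiesConditionB γ μ C T) (hγ : γ ≤ 1)
    (hμ : 0 ≤ μ) (hμγ : 2 * μ ≤ γ) {x y : X} (hx : x ∈ C) (hy : y ∈ C)
    (hp : γ * ‖x - T x‖ ≤ ‖x - y‖ + μ * ‖y - T y‖) :
    ‖x - T y‖ ≤ 3 * ‖x - T x‖ + ‖x - y‖ := by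
  have hTxy := hB x hx y hy hp
  have hxTy := norm_sub_le_norm_sub_add_norm_sub x (T x) (T y)
  have hyTx : ‖y - T x‖ ≤ ‖x - y‖ + ‖x - T x‖ := by
    rw [norm_sub_rev x y]; exact norm_sub_le_norm_sub_add_norm_sub y x (T x)
  -- `(1 - μ) ‖x - T y‖ ≤ (1 + μ) ‖x - T x‖ + (1 - γ + μ) ‖x - y‖`, and `1 + μ ≤ 3 (1 - μ)`
  nlinarith [mul_le_mul_of_nonneg_left hyTx hμ, norm_nonneg (x - T x), norm_nonneg (x - y),
    mul_nonneg (sub_nonneg.2 hμγ) (norm_nonneg (x - y))]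

theorem norm_sub_apply_le_of_norm_sub_lt (hB : SatisfiesConditionB γ 0 C T)
    (hmaps : MapsTo T C C) (hγ0 : 0 ≤ γ) (hγ : γ ≤ 1) {x y : X} (hx : x ∈ C) (hy : y ∈ C)
    (hp : ‖x - y‖ < γ * ‖x - T x‖) : ‖x - T y‖ ≤ 3 * ‖x - T x‖ + ‖x - y‖ := by
  simp only [SatisfiesConditionB, zero_mul, add_zero] at hB
  have hTx : ‖T x - T (T x)‖ ≤ (1 - γ) * ‖x - T x‖ :=
    hB x hx (T x) (hmaps hx) (by nlinarith [norm_nonneg (x - T x)])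
  have hTxy : ‖x - T x‖ - ‖x - y‖ ≤ ‖T x - y‖ := by
    linarith [norm_sub_le_norm_sub_add_norm_sub x y (T x), norm_sub_rev y (T x)]
  have hTTxy : ‖T (T x) - T y‖ ≤ (1 - γ) * ‖T x - y‖ :=
    hB (T x) (hmaps hx) y hy (by
      nlinarith [mul_le_mul_of_nonneg_left hTx hγ0,
        mul_nonneg (mul_self_nonneg (1 - γ)) (norm_nonneg (x - T x))])
  have hTxy' : ‖T x - y‖ ≤ ‖x - T x‖ + ‖x - y‖ := by
    rw [norm_sub_rev x (T x)]; exact norm_sub_le_norm_sub_add_norm_sub (T x) x y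
  have := norm_sub_le_norm_sub_add_norm_sub x (T x) (T (T x))
  have := norm_sub_le_norm_sub_add_norm_sub x (T (T x)) (T y)
  nlinarith [mul_le_mul_of_nonneg_left hTxy' (sub_nonneg.2 hγ), norm_nonneg (x - T x),
    mul_nonneg hγ0 (norm_nonneg (x - T x)), mul_nonneg hγ0 (norm_nonneg (T x - y))]

/-- For `μ = 0` the constant is `3`, as `γ / 0 = 0`. -/
theorem satisfiesConditionE (hB : SatisfiesConditionB γ μ C T) (hmaps : MapsTo T C C) (hγ : γ ≤ 1)
    (hμ : 0 ≤ μ) (hμγ : 2 * μ ≤ γ) : SatisfiesConditionE (3 + γ / μ) C T := by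
  intro x hx y hy
  have hγ0 : 0 ≤ γ := by linarith
  by_cases hp : γ * ‖x - T x‖ ≤ ‖x - y‖ + μ * ‖y - T y‖
  · have := hB.norm_sub_apply_le_of_premise hγ hμ hμγ hx hy hp
    nlinarith [mul_nonneg (div_nonneg hγ0 hμ) (norm_nonneg (x - T x))]
  rw [not_le] at hp
  rcases hμ.eq_or_lt with rfl | hμ
  · rw [div_zero, add_zero]
    exact hB.norm_sub_apply_le_of_norm_sub_lt hmaps hγ0 hγ hx hy (by simpa using hp)
  · have hyTy : ‖y - T y‖ ≤ γ / μ * ‖x - T x‖ := by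
      rw [div_mul_eq_mul_div, le_div_iff₀ hμ]
      nlinarith [norm_nonneg (x - y)]
    nlinarith [norm_sub_le_norm_sub_add_norm_sub x y (T y), norm_nonneg (x - T x)]

theorem norm_iterate_succ_sub_le (hB : SatisfiesConditionB γ μ C T) (hmaps : MapsTo T C C)
    (hγ : γ ≤ 1) (hμ : 0 ≤ μ) {c : X} (hc : c ∈ C) (n : ℕ) :
    ‖T^[n + 1] c - T^[n + 2] c‖ ≤ (1 - γ) * ‖T^[n] c - T^[n + 1] c‖ +
      μ * ‖(T^[n] c - T^[n + 1] c) + (T^[n + 1] c - T^[n + 2] c)‖ := by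
  set y := T^[n] c
  have hy : y ∈ C := hmaps.iterate n hc
  simp only [iterate_succ_apply', sub_add_sub_cancel]
  have := hB y hy (T y) (hmaps hy) (by
    nlinarith [norm_nonneg (y - T y), mul_nonneg hμ (norm_nonneg (T y - T (T y)))])
  rwa [sub_self, norm_zero, add_zero] at this

theorem tendsto_norm_iterate_sub_apply [NormedSpace ℝ X] [UniformConvexSpace X]
    (hB : SatisfiesConditionB γ μ C T) (hmaps : MapsTo T C C) (hγ0 : 0 < γ) (hγ : γ ≤ 1)
    (hμ : 0 ≤ μ) (hμγ : 2 * μ ≤ γ) (hC : IsBounded C) {c : X} (hc : c ∈ C) :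
    Tendsto (fun n => ‖T^[n] c - T (T^[n] c)‖) atTop (𝓝 0) := by
  have hx : IsBounded (range fun n => T^[n] c) :=
    hC.subset (range_subset_iff.2 fun n => hmaps.iterate n hc)
  have hd := tendsto_sub_succ_of_norm_succ_le (d := fun n => T^[n] c - T^[n + 1] c) hγ0 hγ hμ
    hμγ (hB.norm_iterate_succ_sub_le hmaps hγ hμ hc)
  simpa only [iterate_succ_apply', norm_zero] using
    (tendsto_sub_succ_of_isBounded_range hx hd).norm

end SatisfiesConditionB

end FixedPointTheory

theorem condB_fixed_point_weakly_compact_general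
    {X : Type*} [NormedAddCommGroup X] [NormedSpace ℝ X]
    [UniformConvexSpace X]
    (C : Set X) (hC : C.Nonempty) (hconv : Convex ℝ C)
    (hwcomp : IsCompact (toWeakSpace ℝ X '' C))
    (γ μ : ℝ) (hγ : γ ∈ Set.Icc (0 : ℝ) 1) (hμ : μ ∈ Set.Icc (0 : ℝ) (1 / 2))
    (hμγ : 2 * μ ≤ γ)
    (T : X → X) (hmaps : Set.MapsTo T C C)
    (hB : ∀ x ∈ C, ∀ y ∈ C,
      γ * ‖x - T x‖ ≤ ‖x - y‖ + μ * ‖y - T y‖ →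
        ‖T x - T y‖ ≤ (1 - γ) * ‖x - y‖ + μ * (‖x - T y‖ + ‖y - T x‖)) :
    ∃ z ∈ C, T z = z := by
  obtain ⟨c, hc⟩ := hC
  have hbdd : IsBounded C := isBounded_of_isCompact_toWeakSpace_image hwcomp
  have hafp : ∀ ε > 0, ∃ x ∈ C, ‖x - T x‖ < ε := by
    intro ε hε
    rcases hγ.1.eq_or_lt with rfl | hγ0
    · obtain rfl : μ = 0 := by linarith [hμ.1]
      refine exists_norm_sub_apply_lt_of_nonexpansive hconv hbdd hmaps (fun x hx y hy => ?_) hc hε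
      simpa using hB x hx y hy (by simp)
    · obtain ⟨n, hn⟩ := ((SatisfiesConditionB.tendsto_norm_iterate_sub_apply hB hmaps hγ0 hγ.2
        hμ.1 hμγ hbdd hc).eventually (gt_mem_nhds hε)).exists
      exact ⟨_, hmaps.iterate n hc, hn⟩
  exact (SatisfiesConditionB.satisfiesConditionE hB hmaps hγ.2 hμ.1 hμγ).exists_fixedPoint hconv
    hwcomp hmaps hafp

/-- A self-map of a nonempty convex weakly compact subset of a uniformly
convex Banach space satisfying condition `B_{γ,μ}` has a fixed point. -/
theorem condB_fixed_point_weakly_compact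
    {X : Type*} [NormedAddCommGroup X] [NormedSpace ℝ X] [CompleteSpace X]
    [UniformConvexSpace X]
    (C : Set X) (hC : C.Nonempty) (hconv : Convex ℝ C)
    (hwcomp : IsCompact (toWeakSpace ℝ X '' C))
    (γ μ : ℝ) (hγ : γ ∈ Set.Icc (0 : ℝ) 1) (hμ : μ ∈ Set.Icc (0 : ℝ) (1 / 2))
    (hμγ : 2 * μ ≤ γ)
    (T : X → X) (hmaps : Set.MapsTo T C C)
    (hB : ∀ x ∈ C, ∀ y ∈ C,
      γ * ‖x - T x‖ ≤ ‖x - y‖ + μ * ‖y - T y‖ →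
        ‖T x - T y‖ ≤ (1 - γ) * ‖x - y‖ + μ * (‖x - T y‖ + ‖y - T x‖)) :
    ∃ z ∈ C, T z = z :=
  condB_fixed_point_weakly_compact_general C hC hconv hwcomp γ μ hγ hμ hμγ T hmaps hB
end

section
/- There exists γ₀ ∈ (0,1] such that the following holds. Let X be a uniformly convex real Banach space, let C be a nonempty compact convex subset of X, let γ ∈ (0, γ₀] and μ ∈ [0,1/2] with 2μ ≤ γ, and let T₁, T₂, T₃ : C → C be pairwise commuting mappings each satisfying condition B_{γ,μ} on C. Fix λ ∈ (0,1) and a sequence {α_n} in [0, 1/2] with liminf_{n→∞} α_n = 0, limsup_{n→∞} α_n > 0, and lim_{n→∞}(α_{n+1} − α_n) = 0. For x₀ ∈ C define {x_n} by x_{n+1} = λ(1 − α_n − α_n²) T₁ x_n + λ α_n T₂ x_n + λ α_n² T₃ x_n + (1 − λ) x_n for n ≥ 0. Then {x_n} converges strongly (in norm) to a point z ∈ C with T₁ z = T₂ z = T₃ z = z. -/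
universe u

/-!
Under `2μ ≤ γ ≤ 1/2`, condition `B_{γ,μ}` makes `T` quasi-nonexpansive around its fixed points
and yields the demiclosedness estimate `‖y - T y‖ ≤ 4 ‖x - y‖ + 7 ‖x - T x‖`.

In a uniformly convex space the displacement `‖x - T x‖` drops by a definite amount along the
Picard orbit unless two consecutive displacement vectors nearly agree; on a bounded orbit nearly
equal consecutive steps must be small, so the orbit is an approximate fixed point sequence and a
compact `C` contains a fixed point. Since the maps commute, the same applies on the compact sets
of fixed points, which gives a common fixed point `p`.

Each iterate is a convex combination of `T₁ xₙ, T₂ xₙ, T₃ xₙ, xₙ`, so `‖xₙ - p‖` decreases.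
At the infinitely many `n` where all four weights are bounded below (`limsup αₙ > 0`), uniform
convexity forces the four points to be close; a cluster point of these `xₙ` is then a common
fixed point, and the Fejér monotonicity makes the whole sequence converge to it.
-/

open Filter Set Topology Function

section UniformConvex

variable {X : Type*} [NormedAddCommGroup X] [NormedSpace ℝ X] [UniformConvexSpace X]

theorem exists_norm_add_le_two_mul_sub {ε : ℝ} (hε : 0 < ε) (R₀ : ℝ) :
    ∃ δ > 0, ∀ ⦃R : ℝ⦄ ⦃u v : X⦄, R ≤ R₀ → ‖u‖ ≤ R → ‖v‖ ≤ R → ε ≤ ‖u - v‖ →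
      ‖u + v‖ ≤ 2 * R - δ := by
  obtain ⟨δ, hδ, hunit⟩ :=
    exists_forall_closed_ball_dist_add_le_two_sub X (div_pos hε (by positivity : 0 < |R₀| + 1))
  refine ⟨δ * ε / 2, by positivity, fun R u v hR hu hv huv => ?_⟩
  have hεR : ε ≤ 2 * R := huv.trans ((norm_sub_le u v).trans (by linarith))
  have hR0 : 0 < R := by linarith
  have hRinv : 0 ≤ R⁻¹ := by positivity
  have hunit' := hunit (x := R⁻¹ • u) (y := R⁻¹ • v)
    (by rw [norm_smul_of_nonneg hRinv, inv_mul_le_one₀ hR0]; exact hu)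
    (by rw [norm_smul_of_nonneg hRinv, inv_mul_le_one₀ hR0]; exact hv)
    (by
      rw [← smul_sub, norm_smul_of_nonneg hRinv, le_inv_mul_iff₀ hR0]
      calc R * (ε / (|R₀| + 1)) ≤ ε := by
            rw [mul_div_assoc', div_le_iff₀ (by positivity)]
            nlinarith [le_abs_self R₀]
        _ ≤ ‖u - v‖ := huv)
  rw [← smul_add, norm_smul_of_nonneg hRinv, inv_mul_le_iff₀ hR0] at hunit'
  nlinarith

theorem exists_norm_smul_add_smul_le {ε : ℝ} (hε : 0 < ε) (R₀ : ℝ) :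
    ∃ δ > 0, ∀ ⦃R a b : ℝ⦄ ⦃u v : X⦄, 0 ≤ a → 0 ≤ b → R ≤ R₀ → ‖u‖ ≤ R → ‖v‖ ≤ R →
      ε ≤ ‖u - v‖ → ‖a • u + b • v‖ ≤ (a + b) * R - min a b * δ := by
  obtain ⟨δ, hδ, huc⟩ := exists_norm_add_le_two_mul_sub (X := X) hε R₀
  refine ⟨δ, hδ, fun R a b u v ha hb hR hu hv huv => ?_⟩
  rcases le_total a b with hab | hab
  · calc ‖a • u + b • v‖ = ‖a • (u + v) + (b - a) • v‖ := by congr 1; module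
      _ ≤ a * ‖u + v‖ + (b - a) * ‖v‖ := by
          refine (norm_add_le _ _).trans_eq ?_
          rw [norm_smul_of_nonneg ha, norm_smul_of_nonneg (sub_nonneg.2 hab)]
      _ ≤ a * (2 * R - δ) + (b - a) * R := by
          gcongr
          exact huc hR hu hv huv
      _ = (a + b) * R - min a b * δ := by rw [min_eq_left hab]; ring
  · calc ‖a • u + b • v‖ = ‖b • (v + u) + (a - b) • u‖ := by congr 1; module
      _ ≤ b * ‖v + u‖ + (a - b) * ‖u‖ := by
          refine (norm_add_le _ _).trans_eq ?_
          rw [norm_smul_of_nonneg hb, norm_smul_of_nonneg (sub_nonneg.2 hab)]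
      _ ≤ b * (2 * R - δ) + (a - b) * R := by
          gcongr
          exact huc hR hv hu (by rwa [norm_sub_rev])
      _ = (a + b) * R - min a b * δ := by rw [min_eq_right hab]; ring

theorem exists_norm_sum_smul_le {ι : Type*} {ε : ℝ} (hε : 0 < ε) (R₀ : ℝ) :
    ∃ δ > 0, ∀ ⦃s : Finset ι⦄ ⦃c : ι → ℝ⦄ ⦃u : ι → X⦄ ⦃R : ℝ⦄ ⦃i j : ι⦄,
      i ∈ s → j ∈ s → i ≠ j → (∀ k ∈ s, 0 ≤ c k) → R ≤ R₀ → (∀ k ∈ s, ‖u k‖ ≤ R) →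
      ε ≤ ‖u i - u j‖ → ‖∑ k ∈ s, c k • u k‖ ≤ (∑ k ∈ s, c k) * R - min (c i) (c j) * δ := by
  classical
  obtain ⟨δ, hδ, hpair⟩ := exists_norm_smul_add_smul_le (X := X) hε R₀
  refine ⟨δ, hδ, fun s c u R i j hi hj hij hc hR hu huv => ?_⟩
  have hj' : j ∈ s.erase i := Finset.mem_erase.2 ⟨hij.symm, hj⟩
  set t := (s.erase i).erase j
  have hsplit {f : ι → X} : ∑ k ∈ s, f k = f i + f j + ∑ k ∈ t, f k := by
    rw [← Finset.add_sum_erase s f hi, ← Finset.add_sum_erase _ f hj', add_assoc]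
  have hsplit' : ∑ k ∈ s, c k = c i + c j + ∑ k ∈ t, c k := by
    rw [← Finset.add_sum_erase s c hi, ← Finset.add_sum_erase _ c hj', add_assoc]
  have hrest : ‖∑ k ∈ t, c k • u k‖ ≤ (∑ k ∈ t, c k) * R := by
    rw [Finset.sum_mul]
    refine (norm_sum_le _ _).trans (Finset.sum_le_sum fun k hk => ?_)
    have hks : k ∈ s := Finset.mem_of_mem_erase (Finset.mem_of_mem_erase hk)
    rw [norm_smul_of_nonneg (hc k hks)]
    exact mul_le_mul_of_nonneg_left (hu k hks) (hc k hks)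
  rw [hsplit, hsplit']
  have := hpair (hc i hi) (hc j hj) hR (hu i hi) (hu j hj) huv
  linarith [norm_add_le (c i • u i + c j • u j) (∑ k ∈ t, c k • u k)]

end UniformConvex

theorem Antitone.tendsto_sub_succ_zero {f : ℕ → ℝ} (hf : Antitone f) (hb : BddBelow (range f)) :
    Tendsto (fun n => f n - f (n + 1)) atTop (𝓝 0) := by
  have h := tendsto_atTop_ciInf hf hb
  simpa using h.sub (h.comp (tendsto_add_atTop_nat 1))

section Drift

variable {E : Type*} [SeminormedAddCommGroup E] [NormedSpace ℝ E] {z : ℕ → E}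

theorem tendsto_sub_sub_smul_of_tendsto_sub_sub
    (h : Tendsto (fun k => (z (k + 2) - z (k + 1)) - (z (k + 1) - z k)) atTop (𝓝 0)) (m : ℕ) :
    Tendsto (fun k => z (k + m) - z k - (m : ℝ) • (z (k + 1) - z k)) atTop (𝓝 0) := by
  induction m with
  | zero => simpa using tendsto_const_nhds
  | succ m ih =>
    have hshift := (tendsto_add_atTop_iff_nat 1).2 ih
    convert hshift.add (h.const_smul (m : ℝ)) using 1
    · ext k
      simp only [Nat.cast_succ, smul_sub, add_smul, one_smul]
      rw [show k + (m + 1) = k + 1 + m by ring, show k + 1 + 1 = k + 2 by ring]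
      abel
    · simp

theorem tendsto_sub_succ_of_isBounded (hz : Bornology.IsBounded (range z))
    (h : Tendsto (fun k => (z (k + 2) - z (k + 1)) - (z (k + 1) - z k)) atTop (𝓝 0)) :
    Tendsto (fun k => z (k + 1) - z k) atTop (𝓝 0) := by
  obtain ⟨M, hM⟩ := Metric.isBounded_iff.1 hz
  have hzM (j k : ℕ) : ‖z j - z k‖ ≤ M := by
    rw [← dist_eq_norm]; exact hM (mem_range_self j) (mem_range_self k)
  rw [Metric.tendsto_nhds]
  intro η hη
  -- `m` nearly equal steps add up to about `m * ‖z (k + 1) - z k‖`, at most the diameter `M`.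
  obtain ⟨m, hm⟩ := exists_nat_gt (2 * M / η)
  have hM0 : 0 ≤ M := (norm_nonneg _).trans (hzM 0 0)
  have hm0 : (0 : ℝ) < m := (div_nonneg (by linarith) hη.le).trans_lt hm
  filter_upwards [Metric.tendsto_nhds.1 (tendsto_sub_sub_smul_of_tendsto_sub_sub h m) (m * η / 2)
    (by positivity)] with k hk
  rw [dist_zero_right] at hk ⊢
  have hmk : (m : ℝ) * ‖z (k + 1) - z k‖ ≤ M + m * η / 2 := by
    calc (m : ℝ) * ‖z (k + 1) - z k‖ = ‖(m : ℝ) • (z (k + 1) - z k)‖ := by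
          rw [norm_smul_of_nonneg hm0.le]
      _ ≤ ‖z (k + m) - z k‖ + ‖z (k + m) - z k - (m : ℝ) • (z (k + 1) - z k)‖ :=
          norm_le_insert _ _
      _ ≤ M + m * η / 2 := add_le_add (hzM _ _) hk.le
  rw [div_lt_iff₀ hη] at hm
  nlinarith

end Drift

theorem tendsto_of_antitone_norm_sub_of_tendsto_comp {E : Type*} [SeminormedAddCommGroup E]
    {x : ℕ → E} {z : E} {φ : ℕ → ℕ} (hx : Antitone fun n => ‖x n - z‖) (hφ : StrictMono φ)
    (h : Tendsto (x ∘ φ) atTop (𝓝 z)) : Tendsto x atTop (𝓝 z) := by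
  rw [tendsto_iff_norm_sub_tendsto_zero] at h ⊢
  have hinf := tendsto_atTop_ciInf hx ⟨0, by rintro _ ⟨n, rfl⟩; exact norm_nonneg _⟩
  rwa [tendsto_nhds_unique (hinf.comp hφ.tendsto_atTop) h] at hinf

def ConditionB {X : Type*} [NormedAddCommGroup X] (γ μ : ℝ) (C : Set X) (T : X → X) : Prop :=
  ∀ x ∈ C, ∀ y ∈ C, γ * ‖x - T x‖ ≤ ‖x - y‖ + μ * ‖y - T y‖ →
    ‖T x - T y‖ ≤ (1 - γ) * ‖x - y‖ + μ * (‖x - T y‖ + ‖y - T x‖)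

namespace ConditionB

variable {X : Type*} [NormedAddCommGroup X] {γ μ : ℝ} {C : Set X} {T : X → X}

theorem mono {D : Set X} (hB : ConditionB γ μ C T) (hD : D ⊆ C) : ConditionB γ μ D T :=
  fun x hx y hy => hB x (hD hx) y (hD hy)

theorem norm_sub_le_of_isFixedPt (hB : ConditionB γ μ C T) (hμ : 0 ≤ μ) (hμγ : 2 * μ ≤ γ)
    (hγ : γ ≤ 1) {p y : X} (hp : p ∈ C) (hTp : IsFixedPt T p) (hy : y ∈ C) :
    ‖T y - p‖ ≤ ‖y - p‖ := by
  have h := hB p hp y hy (by rw [hTp.eq, sub_self, norm_zero, mul_zero]; positivity)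
  rw [hTp.eq, norm_sub_rev p, norm_sub_rev p] at h
  nlinarith [norm_nonneg (T y - p), norm_nonneg (y - p)]

theorem norm_apply_sub_apply_apply_le (hB : ConditionB γ μ C T) (hμ : 0 ≤ μ) (hγ : γ ≤ 1)
    {x : X} (hx : x ∈ C) (hTx : T x ∈ C) :
    ‖T x - T (T x)‖ ≤ (1 - γ) * ‖x - T x‖ + μ * ‖x - T (T x)‖ := by
  have h := hB x hx (T x) hTx (by nlinarith [norm_nonneg (x - T x), norm_nonneg (T x - T (T x))])
  simpa using h

theorem norm_apply_sub_apply_apply_le_norm_sub (hB : ConditionB γ μ C T) (hμ : 0 ≤ μ)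
    (hμγ : 2 * μ ≤ γ) (hγ : γ ≤ 1) {x : X} (hx : x ∈ C) (hTx : T x ∈ C) :
    ‖T x - T (T x)‖ ≤ ‖x - T x‖ := by
  have h := hB.norm_apply_sub_apply_apply_le hμ hγ hx hTx
  have htri := norm_sub_le_norm_sub_add_norm_sub x (T x) (T (T x))
  nlinarith [norm_nonneg (x - T x), norm_nonneg (T x - T (T x))]

theorem norm_sub_apply_le_of_premise (hB : ConditionB γ μ C T) (hμ : 0 ≤ μ) (hμγ : 2 * μ ≤ γ)
    (hγ : γ ≤ 1) {x y : X} (hx : x ∈ C) (hy : y ∈ C)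
    (h : γ * ‖x - T x‖ ≤ ‖x - y‖ + μ * ‖y - T y‖) :
    ‖y - T y‖ ≤ 4 * ‖x - y‖ + 3 * ‖x - T x‖ := by
  have hTxy := hB x hx y hy h
  have h₁ := norm_sub_le_norm_sub_add_norm_sub y x (T x)
  have h₂ := norm_sub_le_norm_sub_add_norm_sub y (T x) (T y)
  have h₃ := norm_sub_le_norm_sub_add_norm_sub x y (T y)
  rw [norm_sub_rev y x] at h₁
  nlinarith [norm_nonneg (x - y), norm_nonneg (x - T x), norm_nonneg (y - T y),
    mul_le_mul_of_nonneg_left h₁ hμ, mul_le_mul_of_nonneg_left h₃ hμ]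

theorem premise_or_premise_apply (hB : ConditionB γ μ C T) (hμ : 0 ≤ μ) (hμγ : 2 * μ ≤ γ)
    (hγ : γ ≤ 1 / 2) {x : X} (y : X) (hx : x ∈ C) (hTx : T x ∈ C) :
    γ * ‖x - T x‖ ≤ ‖x - y‖ + μ * ‖y - T y‖ ∨
      γ * ‖T x - T (T x)‖ ≤ ‖T x - y‖ + μ * ‖y - T y‖ := by
  by_contra! hcon
  have hd := hB.norm_apply_sub_apply_apply_le_norm_sub hμ hμγ (by linarith) hx hTx
  have htri := norm_sub_le_norm_sub_add_norm_sub x y (T x)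
  rw [norm_sub_rev y] at htri
  nlinarith [norm_nonneg (y - T y), norm_nonneg (x - T x)]

theorem norm_sub_apply_le (hT : MapsTo T C C) (hB : ConditionB γ μ C T) (hμ : 0 ≤ μ)
    (hμγ : 2 * μ ≤ γ) (hγ : γ ≤ 1 / 2) {x y : X} (hx : x ∈ C) (hy : y ∈ C) :
    ‖y - T y‖ ≤ 4 * ‖x - y‖ + 7 * ‖x - T x‖ := by
  rcases hB.premise_or_premise_apply hμ hμγ hγ y hx (hT hx) with h | h
  · linarith [hB.norm_sub_apply_le_of_premise hμ hμγ (by linarith) hx hy h, norm_nonneg (x - T x)]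
  · have h' := hB.norm_sub_apply_le_of_premise hμ hμγ (by linarith) (hT hx) hy h
    have hd := hB.norm_apply_sub_apply_apply_le_norm_sub hμ hμγ (by linarith) hx (hT hx)
    have htri := norm_sub_le_norm_sub_add_norm_sub (T x) x y
    rw [norm_sub_rev (T x) x] at htri
    linarith

theorem isFixedPt_of_tendsto (hT : MapsTo T C C) (hB : ConditionB γ μ C T) (hμ : 0 ≤ μ)
    (hμγ : 2 * μ ≤ γ) (hγ : γ ≤ 1 / 2) {y : ℕ → X} {w : X} (hy : ∀ k, y k ∈ C) (hw : w ∈ C)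
    (hyw : Tendsto y atTop (𝓝 w)) (hd : Tendsto (fun k => ‖y k - T (y k)‖) atTop (𝓝 0)) :
    IsFixedPt T w := by
  have hlim : Tendsto (fun k => 4 * ‖y k - w‖ + 7 * ‖y k - T (y k)‖) atTop (𝓝 0) := by
    simpa using ((tendsto_iff_norm_sub_tendsto_zero.1 hyw).const_mul 4).add (hd.const_mul 7)
  have h := ge_of_tendsto' hlim fun k => hB.norm_sub_apply_le hT hμ hμγ hγ (hy k) hw
  exact (sub_eq_zero.1 (norm_le_zero_iff.1 h)).symm

theorem isCompact_inter_fixedPoints (hC : IsCompact C) (hT : MapsTo T C C)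
    (hB : ConditionB γ μ C T) (hμ : 0 ≤ μ) (hμγ : 2 * μ ≤ γ) (hγ : γ ≤ 1 / 2) :
    IsCompact (C ∩ fixedPoints T) := by
  refine IsSeqCompact.isCompact fun y hy => ?_
  obtain ⟨w, hw, φ, hφ, hlim⟩ := hC.tendsto_subseq fun k => (hy k).1
  have hd : Tendsto (fun k => ‖y (φ k) - T (y (φ k))‖) atTop (𝓝 0) := by
    simp [(hy (φ _)).2.eq]
  exact ⟨w, ⟨hw, hB.isFixedPt_of_tendsto hT hμ hμγ hγ (fun k => (hy (φ k)).1) hw hlim hd⟩,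
    φ, hφ, hlim⟩

section UniformConvex

variable [NormedSpace ℝ X] [UniformConvexSpace X]

theorem exists_pos_le_norm_sub_sub_norm_sub (hT : MapsTo T C C) (hB : ConditionB γ μ C T)
    (hμ : 0 ≤ μ) (hμγ : 2 * μ ≤ γ) (hγ₀ : 0 < γ) (hγ : γ ≤ 1) {η : ℝ} (hη : 0 < η) (R₀ : ℝ) :
    ∃ κ > 0, ∀ ⦃x⦄, x ∈ C → ‖x - T x‖ ≤ R₀ → η ≤ ‖(x - T x) - (T x - T (T x))‖ →
      κ ≤ ‖x - T x‖ - ‖T x - T (T x)‖ := by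
  obtain ⟨δ, hδ, huc⟩ := exists_norm_add_le_two_mul_sub (X := X) hη R₀
  refine ⟨γ / 2 * min δ η, by positivity, fun x hx hR hsep => ?_⟩
  have hstep := hB.norm_apply_sub_apply_apply_le hμ hγ hx (hT hx)
  have hsum : ‖(x - T x) + (T x - T (T x))‖ ≤ 2 * ‖x - T x‖ - δ :=
    huc hR le_rfl (hB.norm_apply_sub_apply_apply_le_norm_sub hμ hμγ hγ hx (hT hx)) hsep
  rw [sub_add_sub_cancel] at hsum
  have hd : η ≤ 2 * ‖x - T x‖ := by
    have := hB.norm_apply_sub_apply_apply_le_norm_sub hμ hμγ hγ hx (hT hx)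
    linarith [norm_sub_le (x - T x) (T x - T (T x))]
  have hm₁ : min δ η ≤ δ := min_le_left _ _
  have hm₂ : min δ η ≤ η := min_le_right _ _
  -- `hstep` and `hsum` give `‖x - T x‖ - ‖T x - T (T x)‖ ≥ (γ - 2μ) ‖x - T x‖ + μ δ`.
  nlinarith [mul_le_mul_of_nonneg_left hsum hμ]

theorem tendsto_norm_sub_iterate (hC : Bornology.IsBounded C) (hT : MapsTo T C C)
    (hB : ConditionB γ μ C T) (hμ : 0 ≤ μ) (hμγ : 2 * μ ≤ γ) (hγ₀ : 0 < γ) (hγ : γ ≤ 1)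
    {x : X} (hx : x ∈ C) : Tendsto (fun k => ‖T^[k] x - T (T^[k] x)‖) atTop (𝓝 0) := by
  set z : ℕ → X := fun k => T^[k] x
  have hzC (k : ℕ) : z k ∈ C := hT.iterate k hx
  have hsucc (k : ℕ) : z (k + 1) = T (z k) := iterate_succ_apply' T k x
  set D : ℕ → ℝ := fun k => ‖z k - T (z k)‖
  have hD : Antitone D := antitone_nat_of_succ_le fun k => by
    simp only [D, hsucc]
    exact hB.norm_apply_sub_apply_apply_le_norm_sub hμ hμγ hγ (hzC k) (hT (hzC k))
  have hsecond : Tendsto (fun k => (z (k + 2) - z (k + 1)) - (z (k + 1) - z k)) atTop (𝓝 0) := by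
    refine Metric.tendsto_nhds.2 fun η hη => ?_
    obtain ⟨κ, hκ, hdrop⟩ := hB.exists_pos_le_norm_sub_sub_norm_sub hT hμ hμγ hγ₀ hγ hη (D 0)
    filter_upwards [(hD.tendsto_sub_succ_zero ⟨0, by rintro _ ⟨k, rfl⟩; positivity⟩).eventually
      (gt_mem_nhds hκ)] with k hk
    rw [dist_zero_right, hsucc, hsucc]
    by_contra! hsep
    have := hdrop (hzC k) (hD (Nat.zero_le k)) (hsep.trans_eq (by congr 1; abel))
    simp only [D, hsucc] at hk
    linarith
  have hlim := (tendsto_sub_succ_of_isBounded (hC.subset (range_subset_iff.2 hzC)) hsecond).norm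
  simpa [hsucc, norm_sub_rev] using hlim

theorem exists_isFixedPt (hC : IsCompact C) (hne : C.Nonempty) (hT : MapsTo T C C)
    (hB : ConditionB γ μ C T) (hμ : 0 ≤ μ) (hμγ : 2 * μ ≤ γ) (hγ₀ : 0 < γ) (hγ : γ ≤ 1 / 2) :
    ∃ z ∈ C, IsFixedPt T z := by
  obtain ⟨x, hx⟩ := hne
  obtain ⟨w, hw, φ, hφ, hlim⟩ := hC.tendsto_subseq fun k => hT.iterate k hx
  have hd := (hB.tendsto_norm_sub_iterate hC.isBounded hT hμ hμγ hγ₀ (by linarith) hx).comp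
    hφ.tendsto_atTop
  exact ⟨w, hw, hB.isFixedPt_of_tendsto hT hμ hμγ hγ (fun k => hT.iterate _ hx) hw hlim hd⟩

end UniformConvex

end ConditionB

theorem mapsTo_inter_fixedPoints {α : Type*} {S T : α → α} {C : Set α} (hS : MapsTo S C C)
    (hST : ∀ x ∈ C, T (S x) = S (T x)) : MapsTo S (C ∩ fixedPoints T) (C ∩ fixedPoints T) :=
  fun x hx => ⟨hS hx.1, by rw [mem_fixedPoints, IsFixedPt, hST x hx.1, hx.2.eq]⟩

theorem ConditionB.exists_common_isFixedPt {X : Type*} [NormedAddCommGroup X] [NormedSpace ℝ X]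
    [UniformConvexSpace X] {γ μ : ℝ} {C : Set X} {T₁ T₂ T₃ : X → X} (hC : IsCompact C)
    (hne : C.Nonempty) (hT₁ : MapsTo T₁ C C) (hT₂ : MapsTo T₂ C C) (hT₃ : MapsTo T₃ C C)
    (h₁₂ : ∀ x ∈ C, T₁ (T₂ x) = T₂ (T₁ x)) (h₁₃ : ∀ x ∈ C, T₁ (T₃ x) = T₃ (T₁ x))
    (h₂₃ : ∀ x ∈ C, T₂ (T₃ x) = T₃ (T₂ x)) (hB₁ : ConditionB γ μ C T₁)
    (hB₂ : ConditionB γ μ C T₂) (hB₃ : ConditionB γ μ C T₃) (hμ : 0 ≤ μ) (hμγ : 2 * μ ≤ γ)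
    (hγ₀ : 0 < γ) (hγ : γ ≤ 1 / 2) :
    ∃ p ∈ C, IsFixedPt T₁ p ∧ IsFixedPt T₂ p ∧ IsFixedPt T₃ p := by
  have hF₁ := hB₁.isCompact_inter_fixedPoints hC hT₁ hμ hμγ hγ
  have hF₁ne : (C ∩ fixedPoints T₁).Nonempty := hB₁.exists_isFixedPt hC hne hT₁ hμ hμγ hγ₀ hγ
  have hT₂F₁ := mapsTo_inter_fixedPoints hT₂ h₁₂
  have hB₂F₁ := hB₂.mono (inter_subset_left (t := fixedPoints T₁))
  have hF₂ := hB₂F₁.isCompact_inter_fixedPoints hF₁ hT₂F₁ hμ hμγ hγ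
  have hF₂ne := hB₂F₁.exists_isFixedPt hF₁ hF₁ne hT₂F₁ hμ hμγ hγ₀ hγ
  have hT₃F₂ := mapsTo_inter_fixedPoints (mapsTo_inter_fixedPoints hT₃ h₁₃) fun x hx => h₂₃ x hx.1
  obtain ⟨p, ⟨⟨hpC, hp₁⟩, hp₂⟩, hp₃⟩ := (hB₃.mono fun x hx => hx.1.1).exists_isFixedPt hF₂ hF₂ne
    hT₃F₂ hμ hμγ hγ₀ hγ
  exact ⟨p, hpC, hp₁, hp₂, hp₃⟩

section WeightedIteration

variable {X : Type*} [NormedAddCommGroup X] [NormedSpace ℝ X] {ι : Type*} [Fintype ι]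
  {S : ι → X → X} {c : ℕ → ι → ℝ} {x : ℕ → X}

theorem mem_of_eq_sum_smul {C : Set X} (hC : Convex ℝ C) (hS : ∀ i, MapsTo (S i) C C)
    (hc₀ : ∀ n i, 0 ≤ c n i) (hc₁ : ∀ n, ∑ i, c n i = 1)
    (hx : ∀ n, x (n + 1) = ∑ i, c n i • S i (x n)) (hx₀ : x 0 ∈ C) (n : ℕ) : x n ∈ C := by
  induction n with
  | zero => exact hx₀
  | succ n ih =>
    rw [hx n]
    exact hC.sum_mem (fun i _ => hc₀ n i) (hc₁ n) fun i _ => hS i ih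

theorem antitone_norm_sub_of_eq_sum_smul (hc₀ : ∀ n i, 0 ≤ c n i) (hc₁ : ∀ n, ∑ i, c n i = 1)
    (hx : ∀ n, x (n + 1) = ∑ i, c n i • S i (x n)) {p : X}
    (hp : ∀ n i, ‖S i (x n) - p‖ ≤ ‖x n - p‖) : Antitone fun n => ‖x n - p‖ :=
  antitone_nat_of_succ_le fun n => by
    have h := (convex_closedBall p ‖x n - p‖).sum_mem (fun i _ => hc₀ n i) (hc₁ n)
      fun i _ => mem_closedBall_iff_norm.2 (hp n i)
    rwa [← hx n, mem_closedBall_iff_norm] at h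

theorem frequently_forall_norm_sub_lt_of_eq_sum_smul [UniformConvexSpace X]
    (hc₀ : ∀ n i, 0 ≤ c n i) (hc₁ : ∀ n, ∑ i, c n i = 1)
    (hx : ∀ n, x (n + 1) = ∑ i, c n i • S i (x n)) {p : X}
    (hp : ∀ n i, ‖S i (x n) - p‖ ≤ ‖x n - p‖) {κ : ℝ} (hκ : 0 < κ)
    (hfreq : ∃ᶠ n in atTop, ∀ i, κ ≤ c n i) {η : ℝ} (hη : 0 < η) :
    ∃ᶠ n in atTop, ∀ i j, ‖S i (x n) - S j (x n)‖ < η := by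
  have hR := antitone_norm_sub_of_eq_sum_smul hc₀ hc₁ hx hp
  obtain ⟨δ, hδ, huc⟩ := exists_norm_sum_smul_le (ι := ι) (X := X) hη ‖x 0 - p‖
  have hdrop := (hR.tendsto_sub_succ_zero ⟨0, by rintro _ ⟨n, rfl⟩; positivity⟩).eventually
    (gt_mem_nhds (mul_pos hκ hδ))
  refine (hfreq.and_eventually hdrop).mono fun n ⟨hn, hdn⟩ i j => ?_
  by_contra! hsep
  have hij : i ≠ j := by rintro rfl; simp only [sub_self, norm_zero] at hsep; linarith
  have hcomb : x (n + 1) - p = ∑ k, c n k • (S k (x n) - p) := by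
    simp [hx n, smul_sub, Finset.sum_sub_distrib, ← Finset.sum_smul, hc₁]
  have h := huc (Finset.mem_univ i) (Finset.mem_univ j) hij (fun k _ => hc₀ n k)
    (hR (Nat.zero_le n)) (fun k _ => hp n k) (by rwa [sub_sub_sub_cancel_right])
  rw [← hcomb, hc₁, one_mul] at h
  have hmin : κ ≤ min (c n i) (c n j) := le_min (hn i) (hn j)
  nlinarith

theorem exists_subseq_tendsto_of_eq_sum_smul [UniformConvexSpace X] {C : Set X}
    (hC : IsCompact C) (hxC : ∀ n, x n ∈ C) (hc₀ : ∀ n i, 0 ≤ c n i)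
    (hc₁ : ∀ n, ∑ i, c n i = 1) (hx : ∀ n, x (n + 1) = ∑ i, c n i • S i (x n)) {p : X}
    (hp : ∀ n i, ‖S i (x n) - p‖ ≤ ‖x n - p‖) {κ : ℝ} (hκ : 0 < κ)
    (hfreq : ∃ᶠ n in atTop, ∀ i, κ ≤ c n i) :
    ∃ z ∈ C, ∃ φ : ℕ → ℕ, StrictMono φ ∧ Tendsto (x ∘ φ) atTop (𝓝 z) ∧
      ∀ i j, Tendsto (fun k => ‖S i (x (φ k)) - S j (x (φ k))‖) atTop (𝓝 0) := by
  obtain ⟨φ, hφ, hφ_lt⟩ := extraction_forall_of_frequently fun k : ℕ =>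
    frequently_forall_norm_sub_lt_of_eq_sum_smul hc₀ hc₁ hx hp hκ hfreq
      (Nat.one_div_pos_of_nat (n := k))
  obtain ⟨z, hz, ψ, hψ, hlim⟩ := hC.tendsto_subseq fun k => hxC (φ k)
  refine ⟨z, hz, φ ∘ ψ, hφ.comp hψ, hlim, fun i j => ?_⟩
  exact squeeze_zero (fun _ => norm_nonneg _) (fun k => (hφ_lt (ψ k) i j).le)
    (tendsto_one_div_add_atTop_nhds_zero_nat.comp hψ.tendsto_atTop)

end WeightedIteration

def iterWeights (l a : ℝ) : Fin 4 → ℝ :=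
  ![l * (1 - a - a ^ 2), l * a, l * a ^ 2, 1 - l]

theorem iterWeights_nonneg {l a : ℝ} (hl : l ∈ Icc (0 : ℝ) 1) (ha : a ∈ Icc (0 : ℝ) (1 / 2))
    (i : Fin 4) : 0 ≤ iterWeights l a i := by
  obtain ⟨hl₀, hl₁⟩ := hl
  obtain ⟨ha₀, ha₁⟩ := ha
  have h : 0 ≤ 1 - a - a ^ 2 := by nlinarith
  fin_cases i <;> simp [iterWeights] <;> nlinarith [mul_nonneg hl₀ h]

theorem sum_iterWeights (l a : ℝ) : ∑ i, iterWeights l a i = 1 := by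
  simp [iterWeights, Fin.sum_univ_four]
  ring

theorem exists_frequently_le_iterWeights {l : ℝ} (hl : l ∈ Ioo (0 : ℝ) 1) {α : ℕ → ℝ}
    (hα : ∀ n, α n ∈ Icc (0 : ℝ) (1 / 2)) (hsup : 0 < limsup α atTop) :
    ∃ κ > 0, ∃ᶠ n in atTop, ∀ i, κ ≤ iterWeights l (α n) i := by
  obtain ⟨hl₀, hl₁⟩ := hl
  set a := limsup α atTop / 2
  have ha : 0 < a := by positivity
  have hfreq : ∃ᶠ n in atTop, a < α n :=
    frequently_lt_of_lt_limsup (isCoboundedUnder_le_of_le atTop fun n => (hα n).1)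
      (half_lt_self hsup)
  refine ⟨min (l * a ^ 2) (min (l / 4) (1 - l)), by positivity, hfreq.mono fun n hn i => ?_⟩
  obtain ⟨hα₀, hα₁⟩ := hα n
  have h₁ : l * a ^ 2 ≤ l * α n := by gcongr; nlinarith
  have h₂ : l * a ^ 2 ≤ l * α n ^ 2 := by gcongr
  have h₀ : l / 4 ≤ l * (1 - α n - α n ^ 2) := by
    nlinarith [mul_le_mul_of_nonneg_left (show 1 / 4 ≤ 1 - α n - α n ^ 2 by nlinarith) hl₀.le]
  fin_cases i
  exacts [((min_le_right _ _).trans (min_le_left _ _)).trans h₀, (min_le_left _ _).trans h₁,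
    (min_le_left _ _).trans h₂, (min_le_right _ _).trans (min_le_right _ _)]

/-- For sufficiently small `γ`, the iteration for three pairwise commuting
maps satisfying condition `B_{γ,μ}` on a compact convex subset of a uniformly
convex Banach space converges strongly to a common fixed point. -/
theorem condB_three_commuting_convergence :
    ∃ γ₀ : ℝ, γ₀ ∈ Set.Ioc (0 : ℝ) 1 ∧
      ∀ (X : Type u) [NormedAddCommGroup X] [NormedSpace ℝ X] [CompleteSpace X]
        [UniformConvexSpace X]
        (C : Set X), C.Nonempty → Convex ℝ C → IsCompact C →
        ∀ γ μ : ℝ, γ ∈ Set.Ioc (0 : ℝ) γ₀ → μ ∈ Set.Icc (0 : ℝ) (1 / 2) →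
          2 * μ ≤ γ →
        ∀ T₁ T₂ T₃ : X → X,
          Set.MapsTo T₁ C C → Set.MapsTo T₂ C C → Set.MapsTo T₃ C C →
          (∀ x ∈ C, T₁ (T₂ x) = T₂ (T₁ x)) →
          (∀ x ∈ C, T₁ (T₃ x) = T₃ (T₁ x)) →
          (∀ x ∈ C, T₂ (T₃ x) = T₃ (T₂ x)) →
          (∀ x ∈ C, ∀ y ∈ C,
            γ * ‖x - T₁ x‖ ≤ ‖x - y‖ + μ * ‖y - T₁ y‖ →
              ‖T₁ x - T₁ y‖ ≤ (1 - γ) * ‖x - y‖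
                + μ * (‖x - T₁ y‖ + ‖y - T₁ x‖)) →
          (∀ x ∈ C, ∀ y ∈ C,
            γ * ‖x - T₂ x‖ ≤ ‖x - y‖ + μ * ‖y - T₂ y‖ →
              ‖T₂ x - T₂ y‖ ≤ (1 - γ) * ‖x - y‖
                + μ * (‖x - T₂ y‖ + ‖y - T₂ x‖)) →
          (∀ x ∈ C, ∀ y ∈ C,
            γ * ‖x - T₃ x‖ ≤ ‖x - y‖ + μ * ‖y - T₃ y‖ →
              ‖T₃ x - T₃ y‖ ≤ (1 - γ) * ‖x - y‖
                + μ * (‖x - T₃ y‖ + ‖y - T₃ x‖)) →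
        ∀ l : ℝ, l ∈ Set.Ioo (0 : ℝ) 1 →
        ∀ α : ℕ → ℝ, (∀ n, α n ∈ Set.Icc (0 : ℝ) (1 / 2)) →
          Filter.liminf α Filter.atTop = 0 →
          0 < Filter.limsup α Filter.atTop →
          Filter.Tendsto (fun n => α (n + 1) - α n) Filter.atTop (nhds 0) →
        ∀ x : ℕ → X, x 0 ∈ C →
          (∀ n : ℕ, x (n + 1) =
            (l * (1 - α n - (α n) ^ 2)) • T₁ (x n) + (l * α n) • T₂ (x n)
              + (l * (α n) ^ 2) • T₃ (x n) + (1 - l) • x n) →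
          ∃ z ∈ C, T₁ z = z ∧ T₂ z = z ∧ T₃ z = z ∧
            Filter.Tendsto x Filter.atTop (nhds z) := by
  refine ⟨1 / 2, by norm_num, ?_⟩
  rintro X _ _ _ _ C hne hconv hC γ μ ⟨hγ₀, hγ⟩ ⟨hμ, -⟩ hμγ T₁ T₂ T₃ hT₁ hT₂ hT₃ h₁₂ h₁₃ h₂₃
    hB₁ hB₂ hB₃ l hl α hα - hsup - x hx₀ hrec
  replace hB₁ : ConditionB γ μ C T₁ := hB₁
  replace hB₂ : ConditionB γ μ C T₂ := hB₂
  replace hB₃ : ConditionB γ μ C T₃ := hB₃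
  have hγ₁ : γ ≤ 1 := by linarith
  set S : Fin 4 → X → X := ![T₁, T₂, T₃, id]
  have hx (n : ℕ) : x (n + 1) = ∑ i, iterWeights l (α n) i • S i (x n) := by
    simp [hrec n, Fin.sum_univ_four, iterWeights, S]
  have hc₀ (n : ℕ) := iterWeights_nonneg (Ioo_subset_Icc_self hl) (hα n)
  have hc₁ (n : ℕ) := sum_iterWeights l (α n)
  have hxC := mem_of_eq_sum_smul hconv
    (by simp [Fin.forall_fin_succ, S, hT₁, hT₂, hT₃, mapsTo_id]) hc₀ hc₁ hx hx₀
  have hS {q : X} (hq : q ∈ C) (h₁ : IsFixedPt T₁ q) (h₂ : IsFixedPt T₂ q) (h₃ : IsFixedPt T₃ q)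
      (n : ℕ) (i : Fin 4) : ‖S i (x n) - q‖ ≤ ‖x n - q‖ := by
    fin_cases i
    exacts [hB₁.norm_sub_le_of_isFixedPt hμ hμγ hγ₁ hq h₁ (hxC n),
      hB₂.norm_sub_le_of_isFixedPt hμ hμγ hγ₁ hq h₂ (hxC n),
      hB₃.norm_sub_le_of_isFixedPt hμ hμγ hγ₁ hq h₃ (hxC n), le_rfl]
  obtain ⟨p, hp, hp₁, hp₂, hp₃⟩ := ConditionB.exists_common_isFixedPt hC hne hT₁ hT₂ hT₃
    h₁₂ h₁₃ h₂₃ hB₁ hB₂ hB₃ hμ hμγ hγ₀ hγ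
  obtain ⟨κ, hκ, hfreq⟩ := exists_frequently_le_iterWeights hl hα hsup
  obtain ⟨z, hz, φ, hφ, hlim, hclose⟩ :=
    exists_subseq_tendsto_of_eq_sum_smul hC hxC hc₀ hc₁ hx (hS hp hp₁ hp₂ hp₃) hκ hfreq
  have hz₁ := hB₁.isFixedPt_of_tendsto hT₁ hμ hμγ hγ (fun k => hxC _) hz hlim
    (by simpa [S] using hclose 3 0)
  have hz₂ := hB₂.isFixedPt_of_tendsto hT₂ hμ hμγ hγ (fun k => hxC _) hz hlim
    (by simpa [S] using hclose 3 1)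
  have hz₃ := hB₃.isFixedPt_of_tendsto hT₃ hμ hμγ hγ (fun k => hxC _) hz hlim
    (by simpa [S] using hclose 3 2)
  exact ⟨z, hz, hz₁, hz₂, hz₃, tendsto_of_antitone_norm_sub_of_tendsto_comp
    (antitone_norm_sub_of_eq_sum_smul hc₀ hc₁ hx (hS hz hz₁ hz₂ hz₃)) hφ hlim⟩
end
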